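/- arXiv:2007.05819 — 7 statements merged into one kernel-verified Lean document; each statement's English description precedes it below -/
import Mathlib

section
/- Let n > 2, G = C_{2^n} = ⟨a⟩, and F a finite field of characteristic 2. Let σ₃ be the F-linear extension of the automorphism a ↦ a^{2^{n-1}-1} to the group algebra FG. Then the order of the unitary subgroup V_{σ₃}(FG) equals |F|^{2^{n-1}}. -/
open AddMonoidAlgebra

/-- The group algebra of the cyclic group of order `2^n` over `F`. -/
abbrev GA (F : Type) [Field F] (n : ℕ) := AddMonoidAlgebra F (ZMod (2^n))

/-- The ring endomorphism of `GA F n` induced by the group endomorphism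
`a^i ↦ a^(c*i)` (written additively: `i ↦ c * i`). -/
noncomputable def sigma (F : Type) [Field F] (n : ℕ) (c : ZMod (2^n)) :
    GA F n →+* GA F n :=
  AddMonoidAlgebra.mapDomainRingHom F (AddMonoidHom.mulLeft c)

/-- The augmentation map of the group algebra. -/
noncomputable def aug (F : Type) [Field F] (n : ℕ) : GA F n →+* F :=
  ((AddMonoidAlgebra.lift F F (ZMod (2^n))) 1).toRingHom

/-- The group `V(FG)` of normalized units. -/
noncomputable def V (F : Type) [Field F] (n : ℕ) : Subgroup (GA F n)ˣ :=
  (Units.map (aug F n).toMonoidHom).ker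

/-- The unitary subgroup `V_σ(FG)` of normalized units `u` with `σ(u) = u⁻¹`,
for the involution `σ` induced by `a ↦ a^c`. -/
noncomputable def Vsig (F : Type) [Field F] (n : ℕ) (c : ZMod (2^n)) :
    Subgroup (GA F n)ˣ :=
  V F n ⊓ MonoidHom.ker (Units.map (sigma F n c).toMonoidHom * MonoidHom.id _)

/-!
Write `𝐭 = a - 1`. In characteristic 2 we have `𝐭 ^ 2^n = a ^ 2^n - 1 = 0`, so every element of
augmentation 1 is a unit and `|V| = q ^ (2^n - 1)`, where `q = |F|`. The unitary subgroup `V_σ₃`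
is the kernel of the norm `N(u) = σ₃(u) u` on `V`, hence `|V_σ₃| · |N(V)| = |V|`, and it suffices
to show `|V_σ₃| ≥ q ^ 2^(n-1)` and `|N(V)| ≥ q ^ (2^(n-1) - 1)`.

Both bounds come from elements `1 + α 𝐭^d + O(𝐭^(d+1))` with prescribed leading degrees
`d = 2, 4, …, 2^n - 2, 2^n - 1`: products of such elements, one for each degree, determine the
leading coefficients. Since `σ₃(𝐭) ≡ 𝐭 + 𝐭²` modulo `𝐭³`, for odd `j` and `w = 1 + α 𝐭^j` both
`σ₃(w) w⁻¹ ∈ V_σ₃` and `σ₃(w) w ∈ N(V)` have leading term `α 𝐭^(j+1)`, except that for `j = 1` the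
norm has leading coefficient `α² + α`, which runs through the image of the Artin–Schreier map.
Moreover `1 + β 𝐭^(2^n-1)` lies in `V_σ₃`, and `N(a (1 + 𝐭^(2^(n-1)-1))) = 1 + 𝐭^(2^n-1)`.
Counting the coefficients gives a factor `q` per degree for `V_σ₃`; for `N(V)` the image of the
Artin–Schreier map at degree 2 and the values `{0, 1}` at the top degree together give `q`.
-/

lemma MonoidHom.card_range_mul_card_ker {G H : Type*} [Group G] [Group H] (f : G →* H) :
    Nat.card f.range * Nat.card f.ker = Nat.card G := by
  rw [← Subgroup.index_ker, mul_comm, Subgroup.card_mul_index]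

lemma sub_one_pow_two_pow_sub_one {R : Type*} [CommRing R] [CharP R 2] (x : R) (r : ℕ) :
    (x - 1) ^ (2^r - 1) = ∑ j ∈ Finset.range (2^r), x ^ j := by
  induction r with
  | zero => simp
  | succ r ih =>
    have hr : 2^(r+1) - 1 = (2^r - 1) + 2^r := by have := r.one_le_two_pow; omega
    rw [hr, pow_add, ih, sub_pow_char_pow, one_pow, CharTwo.sub_eq_add, mul_add, mul_one,
      pow_succ, mul_two, Finset.sum_range_add, Finset.sum_mul, add_comm]
    simp only [← pow_add, add_comm]

lemma four_le_two_pow_pred {n : ℕ} (hn : 2 < n) : 4 ≤ 2^(n-1) :=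
  Nat.pow_le_pow_right two_pos (show 2 ≤ n - 1 by omega)

namespace GA

variable {F : Type} [Field F] {n : ℕ}

variable (F n) in
noncomputable def gen : GA F n := single 1 1

variable (F n) in
noncomputable def augGen : GA F n := gen F n - 1

local notation "𝐚" => gen F n
local notation "𝐭" => augGen F n

section Basic

lemma aug_single (g : ZMod (2^n)) (r : F) : aug F n (single g r) = r := by
  simp [aug]

lemma aug_algebraMap (r : F) : aug F n (algebraMap F (GA F n) r) = r :=
  aug_single 0 r

lemma aug_augGen : aug F n 𝐭 = 0 := by
  rw [augGen, gen, map_sub, aug_single, map_one, sub_self]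

lemma aug_one_add_mul_augGen_pow {j : ℕ} (hj : j ≠ 0) (α : F) :
    aug F n (1 + algebraMap F (GA F n) α * 𝐭 ^ j) = 1 := by
  simp [aug_augGen, hj]

lemma sigma_single (c g : ZMod (2^n)) (r : F) :
    sigma F n c (single g r) = single (c * g) r := by
  simp [sigma, AddMonoidAlgebra.mapDomainRingHom]

lemma sigma_algebraMap (c : ZMod (2^n)) (r : F) :
    sigma F n c (algebraMap F (GA F n) r) = algebraMap F (GA F n) r := by
  simpa using sigma_single c 0 r

lemma aug_sigma (c : ZMod (2^n)) (x : GA F n) : aug F n (sigma F n c x) = aug F n x := by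
  have : (aug F n).comp (sigma F n c) = aug F n := by
    ext <;> simp [sigma_single, aug_single]
  exact RingHom.congr_fun this x

lemma sigma_sigma {c : ZMod (2^n)} (hc : c * c = 1) (x : GA F n) :
    sigma F n c (sigma F n c x) = x := by
  have : (sigma F n c).comp (sigma F n c) = RingHom.id _ := by
    ext <;> simp [sigma_single, ← mul_assoc, hc]
  exact RingHom.congr_fun this x

lemma gen_eq_one_add_augGen : 𝐚 = 1 + 𝐭 := by
  rw [augGen, add_sub_cancel]

lemma gen_pow (k : ℕ) : 𝐚 ^ k = single (k : ZMod (2^n)) 1 := by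
  rw [gen, single_pow, one_pow, nsmul_one]

lemma gen_pow_two_pow : 𝐚 ^ 2^n = 1 := by
  rw [gen_pow, ZMod.natCast_self]; rfl

lemma isUnit_gen : IsUnit 𝐚 :=
  .of_pow_eq_one gen_pow_two_pow (NeZero.ne _)

lemma augGen_dvd_sub_aug (x : GA F n) : 𝐭 ∣ x - algebraMap F _ (aug F n x) := by
  induction x using induction_linear with
  | zero => simp
  | add x y hx hy => simpa [add_sub_add_comm] using dvd_add hx hy
  | single g r =>
    have h : single g r - algebraMap F _ (aug F n (single g r))
        = algebraMap F _ r * (𝐚 ^ g.val - 1 ^ g.val) := by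
      rw [gen_pow, ZMod.natCast_zmod_val, one_pow, aug_single, mul_sub, mul_one]
      simp [coe_algebraMap, single_mul_single]
    rw [h]
    exact (sub_dvd_pow_sub_pow _ _ _).mul_left _

lemma augGen_dvd_sub_one {x : GA F n} (hx : aug F n x = 1) : 𝐭 ∣ x - 1 := by
  simpa [hx, one_def] using augGen_dvd_sub_aug x

variable (F n) in
noncomputable def equivFun : GA F n ≃ (ZMod (2^n) → F) :=
  AddMonoidAlgebra.coeffEquiv.trans Finsupp.equivFunOnFinite

instance [Finite F] : Finite (GA F n) := .of_equiv _ (equivFun F n).symm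

lemma card_GA : Nat.card (GA F n) = Nat.card F ^ 2^n := by
  rw [Nat.card_congr (equivFun F n), Nat.card_fun, Nat.card_zmod]

lemma mem_V_iff {u : (GA F n)ˣ} : u ∈ V F n ↔ aug F n u = 1 := by
  simp [V, Units.ext_iff]

lemma mem_Vsig_iff {c : ZMod (2^n)} {u : (GA F n)ˣ} :
    u ∈ Vsig F n c ↔ aug F n u = 1 ∧ sigma F n c u * u = 1 := by
  rw [Vsig, Subgroup.mem_inf, mem_V_iff, MonoidHom.mem_ker, Units.ext_iff]
  rfl

lemma sigma_mul_inv_mem_Vsig {c : ZMod (2^n)} (hc : c * c = 1) (w : (GA F n)ˣ) :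
    Units.map (sigma F n c).toMonoidHom w * w⁻¹ ∈ Vsig F n c := by
  rw [mem_Vsig_iff]
  simp only [Units.val_mul, Units.coe_map, RingHom.toMonoidHom_eq_coe, MonoidHom.coe_coe,
    map_mul, aug_sigma, sigma_sigma hc]
  constructor
  · rw [← map_mul, Units.mul_inv, map_one]
  · have hσ : sigma F n c ↑w⁻¹ * sigma F n c ↑w = 1 := by
      rw [← map_mul, Units.inv_mul, map_one]
    linear_combination (sigma F n c ↑w⁻¹ * sigma F n c ↑w) * w.mul_inv + hσ

variable (F n) in
noncomputable def normV (c : ZMod (2^n)) : V F n →* (GA F n)ˣ :=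
  (Units.map (sigma F n c).toMonoidHom * MonoidHom.id _).comp (V F n).subtype

lemma card_ker_normV (c : ZMod (2^n)) : Nat.card (normV F n c).ker = Nat.card (Vsig F n c) := by
  rw [normV, ← MonoidHom.comap_ker, Subgroup.comap_subtype,
    ← Subgroup.card_map_of_injective (V F n).subtype_injective, Subgroup.subgroupOf_map_subtype,
    inf_comm]
  rfl

variable (F n) in
def HasLead (x : GA F n) (d : ℕ) (α : F) : Prop :=
  𝐭 ^ (d+1) ∣ x - (1 + algebraMap F _ α * 𝐭 ^ d)

lemma HasLead.mul_of_dvd {x y : GA F n} {d : ℕ} {α : F} (hx : HasLead F n x d α)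
    (hy : 𝐭 ^ (d+1) ∣ y - 1) : HasLead F n (x * y) d α := by
  unfold HasLead at *
  convert dvd_add (hx.mul_right y) (hy.mul_left (1 + algebraMap F _ α * 𝐭 ^ d)) using 1
  ring

lemma HasLead.augGen_pow_dvd_sub_one {x : GA F n} {d e : ℕ} {α : F} (hx : HasLead F n x d α)
    (he : e ≤ d) : 𝐭 ^ e ∣ x - 1 := by
  have h1 : 𝐭 ^ e ∣ 𝐭 ^ (d+1) := pow_dvd_pow _ (by omega)
  have h2 : 𝐭 ^ e ∣ algebraMap F _ α * 𝐭 ^ d := (pow_dvd_pow _ he).mul_left _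
  convert dvd_add (h1.trans hx) h2 using 1
  ring

lemma augGen_pow_dvd_prod_sub_one {ι : Type*} (s : Finset ι) (f : ι → GA F n) (e : ℕ)
    (hf : ∀ i ∈ s, 𝐭 ^ e ∣ f i - 1) : 𝐭 ^ e ∣ ∏ i ∈ s, f i - 1 := by
  refine Finset.prod_induction f (fun x => 𝐭 ^ e ∣ x - 1) (fun x y hx hy => ?_) (by simp) hf
  convert dvd_add (hx.mul_right y) hy using 1
  ring

variable (n) in
def leadDegree (i : Fin (2^(n-1))) : ℕ := if (i : ℕ) < 2^(n-1) - 1 then 2 * i + 2 else 2^n - 1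

lemma leadDegree_strictMono (hn : 0 < n) : StrictMono (leadDegree n) := by
  intro i j hij
  have := Nat.two_pow_pred_add_two_pow_pred hn
  have := j.isLt
  change (i : ℕ) < j at hij
  unfold leadDegree
  split_ifs <;> omega

lemma leadDegree_lt (hn : 0 < n) (i : Fin (2^(n-1))) : leadDegree n i < 2^n := by
  have := Nat.two_pow_pred_add_two_pow_pred hn
  have := i.isLt
  unfold leadDegree
  split_ifs <;> omega

lemma two_pow_pred_sub_one_mul_self (hn : 2 ≤ n) :
    ((2 : ZMod (2^n)) ^ (n-1) - 1) * (2 ^ (n-1) - 1) = 1 := by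
  have h2n : (2 : ZMod (2^n)) ^ n = 0 := by exact_mod_cast ZMod.natCast_self (2^n)
  have h1 : (2 : ZMod (2^n)) ^ (n-1) * 2 ^ (n-1) = 0 := by
    rw [← pow_add]; exact pow_eq_zero_of_le (by omega) h2n
  have h2 : (2 : ZMod (2^n)) * 2 ^ (n-1) = 0 := by
    rw [← pow_succ']; exact pow_eq_zero_of_le (by omega) h2n
  linear_combination h1 - h2

end Basic

section CharTwo

variable [CharP F 2]

instance : CharP (GA F n) 2 :=
  charP_of_injective_algebraMap (algebraMap F (GA F n)).injective 2

lemma two_eq_zero : (2 : GA F n) = 0 := CharTwo.two_eq_zero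

lemma augGen_pow_two_pow : 𝐭 ^ 2^n = 0 := by
  rw [augGen, sub_pow_char_pow, gen_pow_two_pow, one_pow, sub_self]

lemma augGen_pow_eq_zero {k : ℕ} (hk : 2^n ≤ k) : 𝐭 ^ k = 0 :=
  pow_eq_zero_of_le hk augGen_pow_two_pow

lemma isUnit_of_aug_eq_one {x : GA F n} (hx : aug F n x = 1) : IsUnit x := by
  obtain ⟨z, hz⟩ := augGen_dvd_sub_one hx
  have : IsNilpotent (x - 1) := ⟨2^n, by rw [hz, mul_pow, augGen_pow_two_pow, zero_mul]⟩
  simpa using this.isUnit_add_one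

variable (F n) in
noncomputable def toV (x : GA F n) (hx : aug F n x = 1) : V F n :=
  ⟨(isUnit_of_aug_eq_one hx).unit, mem_V_iff.2 hx⟩

@[simp]
lemma coe_toV (x : GA F n) (hx : aug F n x = 1) : ((toV F n x hx : (GA F n)ˣ) : GA F n) = x := rfl

lemma card_V [Finite F] : Nat.card (V F n) = Nat.card F ^ (2^n - 1) := by
  let A := {x : GA F n // aug F n x = 1}
  let eV : V F n ≃ A :=
    { toFun u := ⟨u.1, mem_V_iff.1 u.2⟩
      invFun x := toV F n x.1 x.2
      left_inv u := by ext; rfl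
      right_inv x := by ext; rfl }
  let eGA : GA F n ≃ F × A :=
    { toFun x := (aug F n x, ⟨x - algebraMap F _ (aug F n x) + 1, by
        rw [map_add, map_sub, aug_algebraMap, sub_self, zero_add, map_one]⟩)
      invFun p := p.2.1 - 1 + algebraMap F _ p.1
      left_inv x := by simp
      right_inv p := by
        refine Prod.ext ?_ (Subtype.ext ?_) <;>
          simp only [map_add, map_sub, map_one, p.2.2, aug_algebraMap] <;> ring }
  have h := (Nat.card_congr eGA).symm.trans card_GA
  rw [Nat.card_prod, ← Nat.card_congr eV] at h
  refine Nat.eq_of_mul_eq_mul_left Nat.card_pos (h.trans ?_)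
  rw [← pow_succ', Nat.sub_add_cancel Nat.one_le_two_pow]

lemma coeff_augGen_pow_two_pow_sub_one : (𝐭 ^ (2^n - 1)).coeff 0 = 1 := by
  classical
  rw [augGen, sub_one_pow_two_pow_sub_one, coeff_sum, Finsupp.finsetSum_apply,
    Finset.sum_eq_single 0]
  · simp
  · intro j hj hj0
    rw [gen_pow, coeff_single, Finsupp.single_apply, if_neg]
    rw [ZMod.natCast_eq_zero_iff]
    exact Nat.not_dvd_of_pos_of_lt (Nat.pos_of_ne_zero hj0) (Finset.mem_range.mp hj)
  · simp

lemma eq_zero_of_augGen_pow_dvd {d : ℕ} (hd : d < 2^n) {α : F}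
    (h : 𝐭 ^ (d+1) ∣ algebraMap F _ α * 𝐭 ^ d) : α = 0 := by
  obtain ⟨z, hz⟩ := h
  have htop : algebraMap F _ α * 𝐭 ^ (2^n - 1) = 0 := by
    calc algebraMap F _ α * 𝐭 ^ (2^n - 1)
        = 𝐭 ^ (2^n - 1 - d) * (algebraMap F _ α * 𝐭 ^ d) := by
          rw [mul_left_comm, ← pow_add]; congr 2; omega
      _ = 𝐭 ^ (2^n) * z := by rw [hz, ← mul_assoc, ← pow_add]; congr 2; omega
      _ = 0 := by rw [augGen_pow_two_pow, zero_mul]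
  simpa [← Algebra.smul_def, coeff_augGen_pow_two_pow_sub_one] using
    congrArg (fun x => x.coeff 0) htop

lemma HasLead.unique {x : GA F n} {d : ℕ} {α β : F} (hα : HasLead F n x d α)
    (hβ : HasLead F n x d β) (hd : d < 2^n) : α = β := by
  refine sub_eq_zero.mp (eq_zero_of_augGen_pow_dvd hd ?_)
  convert dvd_sub hβ hα using 1
  rw [map_sub]; ring

lemma injective_prod_of_hasLead {M : Type*} [CommGroup M] (φ : M →* GA F n) {r : ℕ}
    (S : Fin r → Set F) (d : Fin r → ℕ) (hd : StrictMono d) (hdn : ∀ i, d i < 2^n)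
    (U : Fin r → F → M) (hU : ∀ i, ∀ x ∈ S i, HasLead F n (φ (U i x)) (d i) x) :
    Function.Injective (fun v : (∀ i, S i) => ∏ i, U i (v i)) := by
  induction r with
  | zero => exact fun v w _ => funext fun i => i.elim0
  | succ r ih =>
    intro v w hvw
    simp only [Fin.prod_univ_succ] at hvw
    have hlead : ∀ v : (∀ i, S i), HasLead F n (φ (U 0 (v 0) * ∏ i : Fin r, U i.succ (v i.succ)))
        (d 0) (v 0) := by
      intro v
      rw [map_mul, map_prod]
      refine (hU 0 _ (v 0).2).mul_of_dvd (augGen_pow_dvd_prod_sub_one _ _ _ fun i _ => ?_)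
      exact (hU _ _ (v i.succ).2).augGen_pow_dvd_sub_one (hd (Fin.succ_pos i))
    have h0 : v 0 = w 0 := Subtype.ext <| (hlead v).unique (hvw ▸ hlead w) (hdn 0)
    rw [h0, mul_right_inj] at hvw
    have htail := ih (fun i => S i.succ) (fun i => d i.succ) (hd.comp Fin.strictMono_succ)
      (fun i => hdn i.succ) (fun i => U i.succ) (fun i => hU i.succ) hvw
    funext i
    induction i using Fin.cases with
    | zero => exact h0
    | succ i => exact congrFun htail i

lemma card_pi_le_of_hasLead {M : Type*} [CommGroup M] [Finite M] (φ : M →* GA F n) {r : ℕ}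
    (S : Fin r → Set F) (d : Fin r → ℕ) (hd : StrictMono d) (hdn : ∀ i, d i < 2^n)
    (U : Fin r → F → M) (hU : ∀ i, ∀ x ∈ S i, HasLead F n (φ (U i x)) (d i) x) :
    ∏ i, Nat.card (S i) ≤ Nat.card M := by
  rw [← Nat.card_pi]
  exact Nat.card_le_card_of_injective _ (injective_prod_of_hasLead φ S d hd hdn U hU)

local notation "σ₃" => sigma F n (2 ^ (n - 1) - 1)

lemma sigma3_gen_mul_gen : σ₃ 𝐚 * 𝐚 = 1 + 𝐭 ^ 2^(n-1) := by
  have h : σ₃ 𝐚 * 𝐚 = 𝐚 ^ 2^(n-1) := by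
    rw [gen_pow, gen, sigma_single, single_mul_single, mul_one, mul_one]
    push_cast
    ring_nf
  rw [h, gen_eq_one_add_augGen, add_pow_char_pow, one_pow]

lemma sigma3_augGen_mul_gen : σ₃ 𝐭 * 𝐚 = 𝐭 + 𝐭 ^ 2^(n-1) := by
  rw [augGen, map_sub, map_one, sub_mul, sigma3_gen_mul_gen, augGen]
  linear_combination (1 - gen F n) * two_eq_zero (F := F) (n := n)

lemma sigma3_augGen (hn : 2 < n) : ∃ e, σ₃ 𝐭 = 𝐭 * e ∧ HasLead F n e 1 1 := by
  obtain ⟨k, hk⟩ : ∃ k, 2^(n-1) = k + 3 := ⟨2^(n-1) - 3, by have := four_le_two_pow_pred hn; omega⟩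
  set b := 𝐚 ^ (2^n - 1)
  have hb : 𝐚 * b = 1 := by
    rw [← pow_succ', Nat.sub_add_cancel Nat.one_le_two_pow, gen_pow_two_pow]
  have hσ := sigma3_augGen_mul_gen (F := F) (n := n)
  rw [hk] at hσ
  refine ⟨(1 + 𝐭 ^ (k+2)) * b, ?_, b + 𝐭 ^ k * b, ?_⟩
  · linear_combination b * hσ - σ₃ 𝐭 * hb
  · rw [map_one, pow_one, one_mul]
    linear_combination (1 - 𝐭) * hb - (1 - 𝐭) * b * gen_eq_one_add_augGen (F := F) (n := n)
      - 𝐭 * two_eq_zero (F := F) (n := n)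

lemma sigma3_augGen_pow_of_odd (hn : 2 < n) {j : ℕ} (hj : Odd j) :
    𝐭 ^ (j+2) ∣ σ₃ 𝐭 ^ j - (𝐭 ^ j + 𝐭 ^ (j+1)) := by
  obtain ⟨e, he, hlead⟩ := sigma3_augGen (F := F) hn
  have hj1 : (j : GA F n) = 1 := by
    obtain ⟨i, rfl⟩ := hj
    push_cast
    linear_combination (i : GA F n) * two_eq_zero (F := F) (n := n)
  -- `e ≡ 1 + 𝐭 (mod 𝐭²)`, hence `e ^ j ≡ 1 + j (e - 1) ≡ 1 + 𝐭` for odd `j`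
  have hbinom := sq_dvd_add_pow_sub_sub (e - 1) 1 j
  rw [one_pow, one_pow, one_mul, hj1, mul_one, add_sub_cancel] at hbinom
  have he1 : 𝐭 ∣ e - 1 := by simpa using hlead.augGen_pow_dvd_sub_one (e := 1) le_rfl
  have hej : 𝐭 ^ 2 ∣ e ^ j - (1 + 𝐭) := by
    have he2 : 𝐭 ^ 2 ∣ e - (1 + 𝐭) := by
      unfold HasLead at hlead; rwa [map_one, one_mul, pow_one] at hlead
    have hsplit : e ^ j - (1 + 𝐭) = (e ^ j - (e - 1) - 1) + (e - (1 + 𝐭)) := by ring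
    rw [hsplit]
    exact dvd_add ((pow_dvd_pow_of_dvd he1 2).trans hbinom) he2
  convert mul_dvd_mul_left (𝐭 ^ j) hej using 1
  · ring
  · rw [he, mul_pow]; ring

lemma sigma3_augGen_pow_two_pow_sub_one (hn : 2 < n) :
    σ₃ 𝐭 ^ (2^n - 1) = 𝐭 ^ (2^n - 1) := by
  obtain ⟨e, he, hlead⟩ := sigma3_augGen (F := F) hn
  have he1 : 𝐭 ∣ e - 1 := by simpa using hlead.augGen_pow_dvd_sub_one (e := 1) le_rfl
  obtain ⟨z, hz⟩ := he1.trans (sub_one_dvd_pow_sub_one e (2^n - 1))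
  have htop : 𝐭 ^ (2^n - 1) * 𝐭 = 0 := by
    rw [← pow_succ, Nat.sub_add_cancel Nat.one_le_two_pow, augGen_pow_two_pow]
  rw [he, mul_pow, ← sub_eq_zero, ← mul_sub_one, hz, ← mul_assoc, htop, zero_mul]

lemma sigma3_one_add (hn : 2 < n) {j : ℕ} (hj : Odd j) (α : F) :
    𝐭 ^ (j+2) ∣ σ₃ (1 + algebraMap F _ α * 𝐭 ^ j)
      - (1 + algebraMap F _ α * 𝐭 ^ j + algebraMap F _ α * 𝐭 ^ (j+1)) := by
  rw [map_add, map_one, map_mul, sigma_algebraMap, map_pow]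
  convert (sigma3_augGen_pow_of_odd hn hj).mul_left (algebraMap F (GA F n) α) using 1
  ring

lemma hasLead_sigma3_mul_inv (hn : 2 < n) {j : ℕ} (hj : Odd j) {α : F} (w : (GA F n)ˣ)
    (hw : (w : GA F n) = 1 + algebraMap F _ α * 𝐭 ^ j) :
    HasLead F n (σ₃ w * ↑w⁻¹) (j+1) α := by
  have haug : aug F n w = 1 := hw ▸ aug_one_add_mul_augGen_pow hj.pos.ne' α
  have hinv : 𝐭 ∣ ↑w⁻¹ - 1 := augGen_dvd_sub_one (by simp [haug])
  have hsplit : σ₃ w * ↑w⁻¹ - (1 + algebraMap F _ α * 𝐭 ^ (j+1))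
      = (σ₃ w - (w + algebraMap F _ α * 𝐭 ^ (j+1))) * ↑w⁻¹
        + algebraMap F _ α * (𝐭 ^ (j+1) * (↑w⁻¹ - 1)) := by
    linear_combination w.mul_inv
  unfold HasLead
  rw [hsplit]
  refine dvd_add (Dvd.dvd.mul_right ?_ _) ((mul_dvd_mul_left _ hinv).mul_left _)
  simpa [hw, add_assoc] using sigma3_one_add hn hj α

lemma sigma3_mul_self_one_add (hn : 2 < n) {j : ℕ} (hj : Odd j) (α : F) :
    𝐭 ^ (j+2) ∣ σ₃ (1 + algebraMap F _ α * 𝐭 ^ j) * (1 + algebraMap F _ α * 𝐭 ^ j)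
      - (1 + algebraMap F _ α * 𝐭 ^ (j+1) + algebraMap F _ (α ^ 2) * 𝐭 ^ (2*j)) := by
  obtain ⟨D, hD⟩ := sigma3_one_add hn hj α
  obtain ⟨i, rfl⟩ := hj
  refine ⟨D * (1 + algebraMap F _ α * 𝐭 ^ (2*i+1)) + algebraMap F _ (α ^ 2) * 𝐭 ^ (2*i), ?_⟩
  rw [map_pow]
  linear_combination (1 + algebraMap F _ α * 𝐭 ^ (2*i+1)) * hD
    + algebraMap F _ α * 𝐭 ^ (2*i+1) * two_eq_zero (F := F) (n := n)

lemma hasLead_sigma3_mul_self (hn : 2 < n) {j : ℕ} (hj : Odd j) (hj3 : 3 ≤ j) (α : F) :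
    HasLead F n (σ₃ (1 + algebraMap F _ α * 𝐭 ^ j) * (1 + algebraMap F _ α * 𝐭 ^ j)) (j+1) α := by
  have h : 𝐭 ^ (j+2) ∣ algebraMap F _ (α ^ 2) * 𝐭 ^ (2*j) :=
    (pow_dvd_pow _ (by omega)).mul_left _
  unfold HasLead
  convert dvd_add (sigma3_mul_self_one_add hn hj α) h using 1
  ring

lemma hasLead_sigma3_mul_self_of_one (hn : 2 < n) (γ : F) :
    HasLead F n (σ₃ (1 + algebraMap F _ γ * 𝐭 ^ 1) * (1 + algebraMap F _ γ * 𝐭 ^ 1)) 2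
      (γ ^ 2 + γ) := by
  unfold HasLead
  convert sigma3_mul_self_one_add hn odd_one γ using 2
  rw [map_add]; ring

lemma mem_Vsig_of_coe_eq_one_add_top (hn : 2 < n) {β : F} {u : (GA F n)ˣ}
    (hu : (u : GA F n) = 1 + algebraMap F _ β * 𝐭 ^ (2^n - 1)) :
    u ∈ Vsig F n (2^(n-1) - 1) := by
  have hN : 2^n - 1 ≠ 0 := by have := Nat.one_lt_two_pow (n := n) (by omega); omega
  have hsq : 𝐭 ^ (2^n - 1) * 𝐭 ^ (2^n - 1) = 0 := by
    rw [← pow_add]; exact augGen_pow_eq_zero (by omega)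
  refine mem_Vsig_iff.2 ⟨by rw [hu, aug_one_add_mul_augGen_pow hN], ?_⟩
  rw [hu, map_add, map_one, map_mul, sigma_algebraMap, map_pow,
    sigma3_augGen_pow_two_pow_sub_one hn]
  linear_combination algebraMap F _ β * 𝐭 ^ (2^n - 1) * two_eq_zero (F := F) (n := n)
    + algebraMap F _ β ^ 2 * hsq

lemma sigma3_mul_self_gen_mul (hn : 2 < n) :
    σ₃ (𝐚 * (1 + 𝐭 ^ (2^(n-1) - 1))) * (𝐚 * (1 + 𝐭 ^ (2^(n-1) - 1))) = 1 + 𝐭 ^ (2^n - 1) := by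
  obtain ⟨k, hk, hk2⟩ : ∃ k, 2^(n-1) = k + 1 ∧ 2 ≤ k :=
    ⟨2^(n-1) - 1, by have := four_le_two_pow_pred hn; omega⟩
  have hn' : 2^n = 2*k + 2 := by
    rw [← Nat.two_pow_pred_add_two_pow_pred (by omega : 0 < n), hk]; ring
  have hσa := sigma3_gen_mul_gen (F := F) (n := n)
  have hσt := sigma3_augGen_mul_gen (F := F) (n := n)
  rw [hk] at hσa hσt
  have hak : 𝐚 ^ (k+1) = 1 + 𝐭 ^ (k+1) := by
    rw [← hk, gen_eq_one_add_augGen, add_pow_char_pow, one_pow]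
  have hsk : σ₃ 𝐭 ^ k * 𝐚 ^ k = 𝐭 ^ k * (1 + 𝐭 ^ k) ^ k := by
    rw [← mul_pow, hσt, ← mul_pow]; ring
  have hu : (1 + 𝐭 ^ k) ^ (k+1) = 1 := by
    rw [← hk, add_pow_char_pow, one_pow, ← pow_mul, augGen_pow_eq_zero, add_zero]
    rw [hk, hn']; nlinarith
  rw [show 2^(n-1) - 1 = k by omega, show 2^n - 1 = 2*k + 1 by omega, map_mul, map_add, map_one,
    map_pow]
  -- after multiplying by the unit `𝐚 ^ (k+1) = 1 + 𝐭 ^ (k+1)` both sides are polynomials in `𝐭`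
  refine ((isUnit_gen (F := F) (n := n)).pow (k+1)).mul_right_cancel ?_
  set Z := 1 + 𝐭 ^ (k+1)
  set u := 1 + 𝐭 ^ k
  linear_combination (u * 𝐚 ^ (k+1) + σ₃ 𝐭 ^ k * 𝐚 ^ k * u * 𝐚) * hσa + Z * u * 𝐚 * hsk
    + Z * 𝐭 ^ k * 𝐚 * hu + (Z * u - (1 + 𝐭 ^ (2*k+1))) * hak + Z * 𝐭 ^ k * gen_eq_one_add_augGen (F := F)
    + (𝐭 ^ k + 𝐭 ^ (k+1)) * Z * two_eq_zero (F := F) (n := n)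

lemma pow_le_card_Vsig [Finite F] (hn : 2 < n) :
    Nat.card F ^ 2^(n-1) ≤ Nat.card (Vsig F n (2^(n-1) - 1)) := by
  have hc := two_pow_pred_sub_one_mul_self (n := n) hn.le
  have hN : 2^n - 1 ≠ 0 := by have := Nat.one_lt_two_pow (n := n) (by omega); omega
  let w (j : ℕ) (hj : j ≠ 0) (α : F) : V F n := toV F n _ (aug_one_add_mul_augGen_pow hj α)
  let U (i : Fin (2^(n-1))) (α : F) : Vsig F n (2^(n-1) - 1) :=
    if (i : ℕ) < 2^(n-1) - 1 then ⟨_, sigma_mul_inv_mem_Vsig hc (w (2*i+1) (by omega) α)⟩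
    else ⟨w (2^n - 1) hN α, mem_Vsig_of_coe_eq_one_add_top hn (coe_toV _ _)⟩
  have key := card_pi_le_of_hasLead ((Units.coeHom _).comp (Vsig F n _).subtype)
    (fun _ => Set.univ) (leadDegree n) (leadDegree_strictMono (by omega)) (leadDegree_lt (by omega)) U ?_
  · simpa [Nat.card_univ] using key
  intro i α _
  unfold U leadDegree
  split_ifs with hi
  · exact hasLead_sigma3_mul_inv hn ⟨i, rfl⟩ _ (coe_toV _ _)
  · simp [HasLead, w]

variable (F) in
noncomputable def artinSchreier : F →+ F := (frobenius F 2 : F →+* F).toAddMonoidHom + .id F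

lemma artinSchreier_apply (γ : F) : artinSchreier F γ = γ ^ 2 + γ := rfl

lemma eq_zero_or_eq_one_of_mem_ker_artinSchreier {γ : F} (h : γ ∈ (artinSchreier F).ker) :
    γ = 0 ∨ γ = 1 := by
  rw [AddMonoidHom.mem_ker, artinSchreier_apply] at h
  have : γ * (γ - 1) = 0 := by
    linear_combination h - γ * (CharTwo.two_eq_zero : (2 : F) = 0)
  rcases mul_eq_zero.1 this with h0 | h1
  · exact .inl h0
  · exact .inr (sub_eq_zero.1 h1)

variable (F) in
noncomputable def normCoeffs (m j : ℕ) : Set F :=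
  if j = 0 then (artinSchreier F).range else if j < m - 1 then Set.univ else (artinSchreier F).ker

lemma prod_card_normCoeffs [Finite F] (k : ℕ) :
    ∏ j ∈ Finset.range (k+2), Nat.card (normCoeffs F (k+2) j) = Nat.card F ^ (k+1) := by
  have hmid : ∀ j ∈ Finset.range k, Nat.card (normCoeffs F (k+2) (j+1)) = Nat.card F := by
    intro j hj
    rw [Finset.mem_range] at hj
    simp only [normCoeffs, if_neg j.succ_ne_zero, if_pos (show j + 1 < k + 2 - 1 by omega),
      Nat.card_univ]
  have h0 : normCoeffs F (k+2) 0 = (artinSchreier F).range := if_pos rfl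
  have hlast : normCoeffs F (k+2) (k+1) = (artinSchreier F).ker := by
    simp only [normCoeffs, if_neg k.succ_ne_zero, if_neg (show ¬ k + 1 < k + 2 - 1 by omega)]
  rw [Finset.prod_range_succ, Finset.prod_range_succ', Finset.prod_congr rfl hmid,
    Finset.prod_const, Finset.card_range, h0, hlast, mul_assoc, SetLike.coe_sort_coe,
    SetLike.coe_sort_coe, ← AddSubgroup.index_ker, mul_comm _ (Nat.card _),
    AddSubgroup.card_mul_index, ← pow_succ]

lemma pow_le_card_range_normV [Finite F] (hn : 2 < n) :
    Nat.card F ^ (2^(n-1) - 1) ≤ Nat.card (normV F n (2^(n-1) - 1)).range := by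
  classical
  obtain ⟨k, hk⟩ : ∃ k, 2^(n-1) = k + 2 := ⟨2^(n-1) - 2, by have := four_le_two_pow_pred hn; omega⟩
  let f := (normV F n (2^(n-1) - 1)).rangeRestrict
  let w (j : ℕ) (hj : j ≠ 0) (α : F) : V F n := toV F n _ (aug_one_add_mul_augGen_pow hj α)
  let U (i : Fin (2^(n-1))) (x : F) : (normV F n (2^(n-1) - 1)).range :=
    if (i : ℕ) = 0 then f (w 1 one_ne_zero (Function.invFun (artinSchreier F) x))
    else if (i : ℕ) < 2^(n-1) - 1 then f (w (2*i+1) (by omega) x)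
    else if x = 0 then 1
    else f (toV F n (𝐚 * (1 + 𝐭 ^ (2^(n-1) - 1))) (by
      rw [map_mul, map_add, map_one, map_pow, aug_augGen, zero_pow (by omega), add_zero, mul_one,
        gen, aug_single]))
  have key := card_pi_le_of_hasLead ((Units.coeHom _).comp (Subgroup.subtype _))
    (normCoeffs F (2^(n-1)) ·) (leadDegree n) (leadDegree_strictMono (by omega))
    (leadDegree_lt (by omega)) U ?_
  · refine le_trans (le_of_eq ?_) key
    rw [Fin.prod_univ_eq_prod_range (fun j => Nat.card (normCoeffs F (2^(n-1)) j)), hk,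
      prod_card_normCoeffs]
    rfl
  intro i x hx
  unfold U leadDegree
  simp only [normCoeffs] at hx
  split_ifs at hx ⊢ with h0 h1 hx0 hx1
  · have h := hasLead_sigma3_mul_self_of_one hn (Function.invFun (artinSchreier F) x)
    rw [← artinSchreier_apply, Function.invFun_eq hx] at h
    rwa [h0]
  · omega
  · exact hasLead_sigma3_mul_self hn ⟨i, rfl⟩ (by omega) x
  · simp [HasLead, hx1]
  · obtain rfl : x = 1 := (eq_zero_or_eq_one_of_mem_ker_artinSchreier hx).resolve_left hx1
    show HasLead F n (σ₃ (𝐚 * (1 + 𝐭 ^ (2^(n-1) - 1))) * (𝐚 * (1 + 𝐭 ^ (2^(n-1) - 1)))) _ _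
    rw [HasLead, sigma3_mul_self_gen_mul hn, map_one, one_mul, sub_self]
    exact dvd_zero _

end CharTwo

end GA

/-- For `n > 2` and the involution `σ₃ : a ↦ a^{2^{n-1}-1}`,
`|V_{σ₃}(FC_{2^n})| = |F|^{2^{n-1}}`. -/
theorem card_unitary_sigma3_cyclic (F : Type) [Field F] [Fintype F] (hF : CharP F 2)
    (n : ℕ) (hn : 2 < n) :
    Nat.card (Vsig F n (2^(n-1) - 1)) = Nat.card F ^ 2^(n-1) := by
  have hcard : Nat.card (GA.normV F n (2^(n-1) - 1)).range * Nat.card (Vsig F n (2^(n-1) - 1))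
      = Nat.card F ^ (2^(n-1) - 1) * Nat.card F ^ 2^(n-1) := by
    rw [← GA.card_ker_normV, MonoidHom.card_range_mul_card_ker, GA.card_V, ← pow_add]
    have := Nat.two_pow_pred_add_two_pow_pred (show 0 < n by omega)
    have := Nat.one_le_two_pow (n := n - 1)
    congr 1
    omega
  refine le_antisymm (Nat.le_of_mul_le_mul_left ?_ (pow_pos (Nat.card_pos (α := F)) (2^(n-1) - 1)))
    (GA.pow_le_card_Vsig hn)
  exact (Nat.mul_le_mul_right _ (GA.pow_le_card_range_normV hn)).trans hcard.le
end

section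
/- Let n > 2, G = C_{2^n} = ⟨a⟩, and F a finite field of characteristic 2. Let σ₄ be the F-linear extension of the automorphism a ↦ a^{2^{n-1}+1}. Then V_{σ₄}(FG) is an elementary abelian 2-group of order |F|^{2^{n-1}}. -/
open AddMonoidAlgebra

/-!
Write `a` for the generator and `z = a^(2^(n-1))`. The involution `σ₄` fixes the even powers of
`a` and multiplies the odd ones by `z`, so splitting `u = x + y` into even and odd parts gives
`σ₄ u = x + z y`. In characteristic `2` squaring is the Frobenius, and since the kernel of squaring
in `C_(2^n)` is `{1, z}`, `w ^ 2 = 0` holds exactly when `z w = w`. An element of nonzero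
augmentation is a unit, its `2^n`-th power being a nonzero scalar.

Compare the even and odd parts of `σ₄(u) u = 1`: `x² + z y² = 1` and `(1 + z) x y = 0`. If `x` is
a unit then `z y = y`, so `y² = 0`, `x² = 1` and `u² = 1`. Otherwise `y` is a unit, `z x = x`
and `y² = z`, impossible for `n > 2` since the square of an odd element has no coefficient at
exponents divisible by `4`. Conversely every `u` with `u² = 1` lies in `V_σ₄`. So `V_σ₄` is the set
of units with `u² = 1`, in bijection via `u ↦ u - 1` with the square-zero elements, that is, with
the coefficient functions of period `2^(n-1)`.
-/

instance AddMonoidAlgebra.charP {R G : Type*} [CommSemiring R] [AddMonoid G] (p : ℕ)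
    [CharP R p] : CharP R[G] p :=
  charP_of_injective_algebraMap (R := R) (fun a b h => by simpa using h) p

theorem AddMonoidAlgebra.coeff_pow_char {R G : Type*} [CommSemiring R] [AddCommMonoid G]
    [Fintype G] [DecidableEq G] (p : ℕ) [Fact p.Prime] [CharP R p] (w : R[G]) (k : G) :
    (w ^ p).coeff k = ∑ i with p • i = k, w.coeff i ^ p := by
  induction w using induction_linear with
  | zero => simp [zero_pow (Fact.out : p.Prime).ne_zero]
  | add x y hx hy =>
    simp only [add_pow_char, coeff_add, Finsupp.add_apply, hx, hy, Finset.sum_add_distrib]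
  | single i r =>
    simp [single_pow, Finsupp.single_apply, zero_pow (Fact.out : p.Prime).ne_zero]

def Function.periodicEquiv {G β : Type*} [AddGroup G] (c : G) :
    {f : G → β // Function.Periodic f c} ≃ (G ⧸ AddSubgroup.zmultiples c → β) where
  toFun f := f.2.lift
  invFun g := ⟨g ∘ (↑), fun x => by simp [AddSubgroup.mem_zmultiples]⟩
  left_inv f := Subtype.ext (funext fun x => f.2.lift_coe x)
  right_inv g := funext fun q => QuotientAddGroup.induction_on q fun x => rfl

def CharTwo.unitsSqEqOneEquiv (R : Type*) [CommRing R] [CharP R 2] :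
    {u : Rˣ // u ^ 2 = 1} ≃ {w : R // w ^ 2 = 0} where
  toFun u := ⟨(u.1 : R) - 1, by
    rw [CharTwo.sub_eq_add, CharTwo.add_sq, ← Units.val_pow_eq_pow_val, u.2, Units.val_one,
      one_pow, CharTwo.add_self_eq_zero]⟩
  invFun w :=
    have hw : (1 + w.1) * (1 + w.1) = 1 := by
      rw [← sq, CharTwo.add_sq, w.2, one_pow, add_zero]
    ⟨⟨1 + w, 1 + w, hw, hw⟩, Units.ext (by rw [Units.val_pow_eq_pow_val, sq, hw, Units.val_one])⟩
  left_inv u := Subtype.ext (Units.ext (add_sub_cancel _ _))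
  right_inv w := Subtype.ext (add_sub_cancel_left (1 : R) w.1)

namespace GA

variable {F : Type} [Field F] {n : ℕ}

def half (n : ℕ) : ZMod (2 ^ n) := 2 ^ (n - 1)

lemma half_eq_natCast : half n = ((2 ^ (n - 1) : ℕ) : ZMod (2 ^ n)) := by
  simp [half]

section ZMod

variable [NeZero n]

lemma two_mul_half : 2 * half n = 0 := by
  rw [half, mul_pow_sub_one (NeZero.ne n)]
  exact_mod_cast ZMod.natCast_self (2 ^ n)

lemma half_add_half : half n + half n = 0 := by
  rw [← two_mul, two_mul_half]

lemma neg_half : -half n = half n :=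
  neg_eq_of_add_eq_zero_left half_add_half

lemma half_ne_zero : half n ≠ 0 := by
  have := NeZero.ne n
  rw [half_eq_natCast, Ne, ZMod.natCast_eq_zero_iff, Nat.pow_dvd_pow_iff_le_right (by norm_num)]
  omega

lemma two_mul_eq_zero_iff {k : ZMod (2 ^ n)} : 2 * k = 0 ↔ k = 0 ∨ k = half n := by
  refine ⟨fun h => ?_, by rintro (rfl | rfl) <;> simp [two_mul_half]⟩
  have hpow : 2 * 2 ^ (n - 1) = 2 ^ n := mul_pow_sub_one (NeZero.ne n) 2
  rw [← ZMod.natCast_zmod_val k] at h ⊢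
  obtain ⟨m, hm⟩ : 2 ^ (n - 1) ∣ k.val := by
    refine Nat.dvd_of_mul_dvd_mul_left two_pos ?_
    rw [hpow, ← ZMod.natCast_eq_zero_iff]
    exact_mod_cast h
  have hm2 : m < 2 := by
    have := ZMod.val_lt k
    rw [hm, ← hpow, mul_comm] at this
    exact Nat.lt_of_mul_lt_mul_right this
  interval_cases m <;> simp [hm, half_eq_natCast]

lemma two_mul_eq_two_mul_iff {i j : ZMod (2 ^ n)} :
    2 * i = 2 * j ↔ i = j ∨ i = j + half n := by
  rw [← sub_eq_zero, ← mul_sub, two_mul_eq_zero_iff, sub_eq_zero, sub_eq_iff_eq_add']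

lemma card_quotient_zmultiples_half :
    Nat.card (ZMod (2 ^ n) ⧸ AddSubgroup.zmultiples (half n)) = 2 ^ (n - 1) := by
  have h := AddSubgroup.card_eq_card_quotient_mul_card_addSubgroup (AddSubgroup.zmultiples (half n))
  rw [Nat.card_zmultiples, addOrderOf_eq_prime (by rw [two_nsmul, half_add_half]) half_ne_zero,
    Nat.card_zmod] at h
  exact Nat.eq_of_mul_eq_mul_right two_pos (h.symm.trans (pow_sub_one_mul (NeZero.ne n) 2).symm)

def parity (n : ℕ) [NeZero n] : ZMod (2 ^ n) →+ ZMod 2 :=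
  (ZMod.castHom (dvd_pow_self 2 (NeZero.ne n)) (ZMod 2)).toAddMonoidHom

lemma parity_eq_natCast_val (i : ZMod (2 ^ n)) : parity n i = (i.val : ZMod 2) :=
  ZMod.cast_eq_val i

lemma parity_two_pow {k : ℕ} (hk : k ≠ 0) : parity n (2 ^ k) = 0 := by
  change ZMod.castHom (dvd_pow_self 2 (NeZero.ne n)) (ZMod 2) (2 ^ k) = 0
  rw [map_pow, map_ofNat]
  exact zero_pow hk

lemma parity_half (hn : 2 ≤ n) : parity n (half n) = 0 :=
  parity_two_pow (by omega)

lemma half_mul_of_parity_eq_zero {i : ZMod (2 ^ n)} (h : parity n i = 0) : half n * i = 0 := by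
  rw [parity_eq_natCast_val, ZMod.natCast_eq_zero_iff_even] at h
  obtain ⟨m, hm⟩ := h
  rw [← ZMod.natCast_zmod_val i, hm, Nat.cast_add, ← two_mul, ← mul_assoc, mul_comm (half n),
    two_mul_half, zero_mul]

lemma half_mul_of_parity_eq_one {i : ZMod (2 ^ n)} (h : parity n i = 1) :
    half n * i = half n := by
  rw [parity_eq_natCast_val, ZMod.natCast_eq_one_iff_odd] at h
  obtain ⟨m, hm⟩ := h
  rw [← ZMod.natCast_zmod_val i, hm, Nat.cast_add, Nat.cast_mul, Nat.cast_ofNat, Nat.cast_one,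
    mul_add, ← mul_assoc, mul_comm (half n), two_mul_half, zero_mul, zero_add, mul_one]

end ZMod

noncomputable def z (F : Type) [Field F] (n : ℕ) : GA F n := single (half n) 1

section CharTwo

variable [NeZero n]

lemma z_mul_z : z F n * z F n = 1 := by
  rw [z, single_mul_single, half_add_half, one_mul, one_def]

lemma coeff_z_mul (w : GA F n) (j : ZMod (2 ^ n)) :
    (z F n * w).coeff j = w.coeff (j + half n) := by
  rw [z, coeff_single_mul_apply, neg_half, one_mul, add_comm]

lemma z_mul_eq_self_iff {w : GA F n} :
    z F n * w = w ↔ Function.Periodic w.coeff (half n) := by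
  rw [← coeff_inj, Finsupp.ext_iff]
  simp only [coeff_z_mul]
  rfl

variable [CharP F 2]

lemma coeff_sq_two_mul (w : GA F n) (j : ZMod (2 ^ n)) :
    (w ^ 2).coeff (2 * j) = (w.coeff j + w.coeff (j + half n)) ^ 2 := by
  have hfiber : ({i | 2 • i = 2 * j} : Finset (ZMod (2 ^ n))) = {j, j + half n} := by
    ext i
    simp [two_mul_eq_two_mul_iff]
  have hne : j ≠ j + half n := by simpa using half_ne_zero (n := n)
  rw [coeff_pow_char, hfiber, Finset.sum_pair hne, CharTwo.add_sq]

lemma sq_eq_zero_iff_periodic {w : GA F n} :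
    w ^ 2 = 0 ↔ Function.Periodic w.coeff (half n) := by
  constructor
  · intro h j
    have := coeff_sq_two_mul w j
    rw [h, coeff_zero, Finsupp.zero_apply, eq_comm, pow_eq_zero_iff two_ne_zero,
      CharTwo.add_eq_zero] at this
    exact this.symm
  · intro h
    ext k
    by_cases hk : ∃ j, 2 * j = k
    · obtain ⟨j, rfl⟩ := hk
      rw [coeff_sq_two_mul, h j, CharTwo.add_self_eq_zero, zero_pow two_ne_zero, coeff_zero,
        Finsupp.zero_apply]
    · rw [coeff_pow_char, coeff_zero, Finsupp.zero_apply]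
      refine Finset.sum_eq_zero fun i hi => absurd ⟨i, ?_⟩ hk
      simpa [two_nsmul, two_mul] using hi

lemma sq_eq_zero_iff {w : GA F n} : w ^ 2 = 0 ↔ z F n * w = w :=
  sq_eq_zero_iff_periodic.trans z_mul_eq_self_iff.symm

lemma card_sq_eq_zero : Nat.card {w : GA F n // w ^ 2 = 0} = Nat.card F ^ 2 ^ (n - 1) := by
  let e : {w : GA F n // w ^ 2 = 0} ≃ {f : ZMod (2 ^ n) → F // Function.Periodic f (half n)} :=
    (coeffEquiv.trans Finsupp.equivFunOnFinite).subtypeEquiv fun _ => sq_eq_zero_iff_periodic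
  rw [Nat.card_congr (e.trans (Function.periodicEquiv _)), Nat.card_fun,
    card_quotient_zmultiples_half]

end CharTwo

lemma pow_two_pow_eq_algebraMap_aug [CharP F 2] (x : GA F n) :
    x ^ 2 ^ n = algebraMap F (GA F n) (aug F n x ^ 2 ^ n) := by
  suffices iterateFrobenius (GA F n) 2 n =
      (algebraMap F (GA F n)).comp ((iterateFrobenius F 2 n).comp (aug F n)) from
    congr($this x)
  refine ringHom_ext (fun r => ?_) (fun m => ?_) <;>
    simp [iterateFrobenius_def, aug, single_pow]

lemma isUnit_of_aug_ne_zero [CharP F 2] {x : GA F n} (hx : aug F n x ≠ 0) : IsUnit x := by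
  have : IsUnit (x ^ 2 ^ n) := by
    rw [pow_two_pow_eq_algebraMap_aug]
    exact (pow_ne_zero _ hx).isUnit.map _
  exact (isUnit_pow_iff (pow_ne_zero _ two_ne_zero)).1 this

lemma z_mul_eq_self_of_aug_ne_zero [CharP F 2] {x y : GA F n} (hx : aug F n x ≠ 0)
    (h : x * (y + z F n * y) = 0) : z F n * y = y :=
  (CharTwo.add_eq_zero.1 ((isUnit_of_aug_ne_zero hx).mul_right_eq_zero.1 h)).symm

section Parity

variable [NeZero n]

abbrev evens (F : Type) [Field F] (n : ℕ) [NeZero n] : Submodule F (GA F n) :=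
  gradeBy F (parity n) 0

abbrev odds (F : Type) [Field F] (n : ℕ) [NeZero n] : Submodule F (GA F n) :=
  gradeBy F (parity n) 1

lemma exists_add_eq (u : GA F n) : ∃ x ∈ evens F n, ∃ y ∈ odds F n, x + y = u := by
  induction u using induction_linear with
  | zero => exact ⟨0, zero_mem _, 0, zero_mem _, add_zero 0⟩
  | add u v hu hv =>
    obtain ⟨x, hx, y, hy, rfl⟩ := hu
    obtain ⟨x', hx', y', hy', rfl⟩ := hv
    exact ⟨x + x', add_mem hx hx', y + y', add_mem hy hy', add_add_add_comm x x' y y'⟩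
  | single i r =>
    have hi := single_mem_gradeBy (R := F) (parity n) i r
    obtain h | h : parity n i = 0 ∨ parity n i = 1 := by
      generalize parity n i = a
      revert a
      decide
    · exact ⟨single i r, by rwa [h] at hi, 0, zero_mem _, add_zero _⟩
    · exact ⟨0, zero_mem _, single i r, by rwa [h] at hi, zero_add _⟩

lemma eq_and_eq_of_add_eq_add {x x' y y' : GA F n} (hx : x ∈ evens F n) (hx' : x' ∈ evens F n)
    (hy : y ∈ odds F n) (hy' : y' ∈ odds F n) (h : x + y = x' + y') : x = x' ∧ y = y' := by
  have hdisj : Disjoint (evens F n) (odds F n) :=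
    (gradeBy.isInternal (parity n)).submodule_iSupIndep.pairwiseDisjoint
      (by decide : (0 : ZMod 2) ≠ 1)
  have hdiff : x - x' = y' - y := by rw [sub_eq_sub_iff_add_eq_add, h, add_comm]
  have h0 := Submodule.disjoint_def.1 hdisj _ (sub_mem hx hx') (hdiff ▸ sub_mem hy' hy)
  exact ⟨sub_eq_zero.1 h0, (sub_eq_zero.1 (hdiff ▸ h0)).symm⟩

lemma mul_mem_evens {x x' : GA F n} (hx : x ∈ evens F n) (hx' : x' ∈ evens F n) :
    x * x' ∈ evens F n :=
  SetLike.GradedMul.mul_mem hx hx'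

lemma mul_mem_odds {x y : GA F n} (hx : x ∈ evens F n) (hy : y ∈ odds F n) :
    x * y ∈ odds F n := by
  simpa using SetLike.GradedMul.mul_mem hx hy

lemma mul_mem_evens_of_mem_odds {y y' : GA F n} (hy : y ∈ odds F n) (hy' : y' ∈ odds F n) :
    y * y' ∈ evens F n :=
  SetLike.GradedMul.mul_mem hy hy'

lemma z_mem_evens (hn : 2 ≤ n) : z F n ∈ evens F n := by
  have hz := single_mem_gradeBy (R := F) (parity n) (half n) 1
  rwa [parity_half hn] at hz

lemma sigma_of_mem_evens {x : GA F n} (hx : x ∈ evens F n) : sigma F n (half n + 1) x = x := by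
  rw [sigma, mapDomainRingHom_apply, ← coeff_inj, coeff_mapDomain]
  refine (Finsupp.mapDomain_congr fun i hi => ?_).trans Finsupp.mapDomain_id
  simp [add_mul, half_mul_of_parity_eq_zero (hx i hi)]

lemma sigma_of_mem_odds {y : GA F n} (hy : y ∈ odds F n) :
    sigma F n (half n + 1) y = z F n * y := by
  rw [sigma, mapDomainRingHom_apply, ← coeff_inj, coeff_mapDomain,
    Finsupp.mapDomain_congr (g := (half n + ·)) fun i hi => ?_]
  · ext j
    have hj : j = half n + (j + half n) := by rw [add_left_comm, half_add_half, add_zero]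
    conv_lhs => rw [hj]
    rw [Finsupp.mapDomain_apply (add_right_injective (half n)), coeff_z_mul]
  · simp [add_mul, half_mul_of_parity_eq_one (hy i hi)]

lemma sq_ne_z_of_mem_odds [CharP F 2] (hn : 2 < n) {y : GA F n} (hy : y ∈ odds F n) :
    y ^ 2 ≠ z F n := by
  intro h
  -- The coefficient of `y ^ 2` at `half n = 2 * 2 ^ (n - 2)` only involves coefficients of `y`
  -- at the even exponents `2 ^ (n - 2)` and `2 ^ (n - 2) + half n`; here `n > 2` is needed.
  have hzero : ∀ i, parity n i = 0 → y.coeff i = 0 := fun i hi =>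
    Finsupp.notMem_support_iff.1 fun hmem => zero_ne_one (hi.symm.trans (hy i hmem))
  have hhalf : half n = 2 * 2 ^ (n - 1 - 1) := (mul_pow_sub_one (by omega) 2).symm
  have hc := coeff_sq_two_mul y (2 ^ (n - 1 - 1))
  rw [← hhalf, h, hzero _ (parity_two_pow (by omega)),
    hzero _ (by rw [map_add, parity_two_pow (by omega), parity_half hn.le, add_zero]),
    z, coeff_single, Finsupp.single_eq_same] at hc
  norm_num at hc

end Parity

section Characterization

variable [NeZero n] [CharP F 2]

lemma sq_eq_one_of_sigma_mul_self_eq_one (hn : 2 < n) {u : GA F n} (haug : aug F n u = 1)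
    (h : sigma F n (half n + 1) u * u = 1) : u ^ 2 = 1 := by
  obtain ⟨x, hx, y, hy, rfl⟩ := exists_add_eq u
  have hz := z_mem_evens (F := F) hn.le
  rw [map_add, sigma_of_mem_evens hx, sigma_of_mem_odds hy] at h
  obtain ⟨heven, hodd⟩ : x * x + z F n * y * y = 1 ∧ x * y + z F n * y * x = 0 :=
    eq_and_eq_of_add_eq_add
      (add_mem (mul_mem_evens hx hx) (mul_mem_evens_of_mem_odds (mul_mem_odds hz hy) hy))
      SetLike.GradedOne.one_mem
      (add_mem (mul_mem_odds hx hy) (by rw [mul_comm]; exact mul_mem_odds hx (mul_mem_odds hz hy)))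
      (zero_mem _)
      (by rw [← h, add_zero]; ring)
  by_cases hax : aug F n x = 0
  · have hay : aug F n y ≠ 0 := by
      rw [map_add, hax, zero_add] at haug
      exact haug ▸ one_ne_zero
    have hzx : z F n * x = x := z_mul_eq_self_of_aug_ne_zero hay (by rw [← hodd]; ring)
    have hxx : x * x = 0 := by rw [← sq, sq_eq_zero_iff, hzx]
    refine absurd ?_ (sq_ne_z_of_mem_odds hn hy)
    rw [hxx, zero_add] at heven
    calc y ^ 2 = z F n * z F n * (y * y) := by rw [z_mul_z, one_mul, sq]
      _ = z F n := by rw [mul_assoc, ← mul_assoc (z F n) y y, heven, mul_one]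
  · have hzy : z F n * y = y := z_mul_eq_self_of_aug_ne_zero hax (by rw [← hodd]; ring)
    rw [hzy, ← sq y, sq_eq_zero_iff.2 hzy, add_zero] at heven
    rw [CharTwo.add_sq, sq_eq_zero_iff.2 hzy, add_zero, sq, heven]

lemma sigma_mul_self_eq_one_of_sq_eq_one (hn : 2 ≤ n) {u : GA F n} (h : u ^ 2 = 1) :
    aug F n u = 1 ∧ sigma F n (half n + 1) u * u = 1 := by
  have hw : (u + 1) ^ 2 = 0 := by rw [CharTwo.add_sq, h, one_pow, CharTwo.add_self_eq_zero]
  constructor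
  · have := congr(aug F n $hw)
    rwa [map_pow, map_zero, pow_eq_zero_iff two_ne_zero, map_add, map_one,
      CharTwo.add_eq_zero] at this
  · obtain ⟨x, hx, y, hy, hxy⟩ := exists_add_eq (u + 1)
    have hz := z_mem_evens (F := F) hn
    have hzy : z F n * y = y := by
      have hzw := sq_eq_zero_iff.1 hw
      rw [← hxy, mul_add] at hzw
      exact (eq_and_eq_of_add_eq_add (mul_mem_evens hz hx) hx (mul_mem_odds hz hy) hy hzw).2
    have hsigma : sigma F n (half n + 1) (u + 1) = u + 1 := by
      rw [← hxy, map_add, sigma_of_mem_evens hx, sigma_of_mem_odds hy, hzy]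
    rw [map_add, map_one, add_left_inj] at hsigma
    rw [hsigma, ← sq, h]

lemma mem_Vsig_iff_s5 (hn : 2 < n) (u : (GA F n)ˣ) : u ∈ Vsig F n (half n + 1) ↔ u ^ 2 = 1 := by
  have hmem : u ∈ Vsig F n (half n + 1) ↔
      aug F n u = 1 ∧ sigma F n (half n + 1) u * u = 1 := by
    simp [Vsig, V, Units.ext_iff]
  rw [hmem, Units.ext_iff, Units.val_pow_eq_pow_val, Units.val_one]
  exact ⟨fun h => sq_eq_one_of_sigma_mul_self_eq_one hn h.1 h.2,
    sigma_mul_self_eq_one_of_sq_eq_one hn.le⟩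

end Characterization

end GA

theorem unitary_sigma4_elementary_abelian_general (F : Type) [Field F] (hF : CharP F 2)
    (n : ℕ) (hn : 2 < n) :
    (∀ u ∈ Vsig F n (2^(n-1) + 1), u^2 = 1) ∧
      Nat.card (Vsig F n (2^(n-1) + 1)) = Nat.card F ^ 2^(n-1) := by
  have : NeZero n := ⟨by omega⟩
  have hmem : ∀ u, u ∈ Vsig F n (2^(n-1) + 1) ↔ u ^ 2 = 1 := GA.mem_Vsig_iff_s5 hn
  refine ⟨fun u hu => (hmem u).1 hu, ?_⟩
  rw [← GA.card_sq_eq_zero]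
  exact Nat.card_congr ((Equiv.subtypeEquivRight hmem).trans (CharTwo.unitsSqEqOneEquiv _))

/-- For `n > 2` and the involution `σ₄ : a ↦ a^{2^{n-1}+1}`, the unitary subgroup
`V_{σ₄}(FC_{2^n})` is an elementary abelian `2`-group of order `|F|^{2^{n-1}}`. -/
theorem unitary_sigma4_elementary_abelian (F : Type) [Field F] [Fintype F] (hF : CharP F 2)
    (n : ℕ) (hn : 2 < n) :
    (∀ u ∈ Vsig F n (2^(n-1) + 1), u^2 = 1) ∧
      Nat.card (Vsig F n (2^(n-1) + 1)) = Nat.card F ^ 2^(n-1) :=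
  unitary_sigma4_elementary_abelian_general F hF n hn
end

section
/- Let n > 2, G = C_{2^n} = ⟨a⟩, and F a finite field of characteristic 2 with involution σ₄ on FG induced by a ↦ a^{2^{n-1}+1}. If x ∈ V(FG) satisfies x·x^{σ₄} = 1, then x is σ₄-symmetric (x^{σ₄} = x) and hence x² = 1. -/
open AddMonoidAlgebra

/-!
Write `m = 2^(n-1)` and `z = a^m`, a central involution. Since `m * i ≡ m * (i mod 2)`, the
involution `σ₄` fixes the even part `e` of `x` and multiplies its odd part `o` by `z`, so
`x * σ₄ x = e² + z o² + (1 + z) e o`. Grade `FG` by exponents modulo `4`: in characteristic `2`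
squaring doubles degrees, so `e²` has degree `0`, `z o²` degree `2` (here `n > 2` puts `z` in
degree `0`) and `(1 + z) e o` odd degree. Comparing homogeneous components of `x * σ₄ x = 1` gives
`e² = 1` and `(1 + z) e o = 0`, hence `(1 + z) o = 0`, i.e. `σ₄ x = x`, and then `x² = x σ₄ x = 1`.
-/

open Pointwise

namespace AddMonoidAlgebra

variable {R M ι : Type*}

instance charP_s6 [CommSemiring R] [AddMonoid M] (p : ℕ) [CharP R p] : CharP R[M] p :=
  charP_of_injective_algebraMap single_right_injective p

section Semiring

variable [Semiring R]

lemma single_mem_supported {s : Set M} {g : M} (r : R) (hg : g ∈ s) :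
    single g r ∈ supported R R s :=
  Finsupp.single_mem_supported R r hg

lemma eq_zero_of_mem_supported_of_disjoint {s t : Set M} {x : R[M]}
    (hs : x ∈ supported R R s) (ht : x ∈ supported R R t) (hst : Disjoint s t) : x = 0 :=
  ext <| Submodule.disjoint_def.1
    (Finsupp.disjoint_supported_supported (M := R) (R := R) hst) _ hs ht

lemma exists_eq_add_mem_supported_compl (s : Set M) (x : R[M]) :
    ∃ y ∈ supported R R s, ∃ w ∈ supported R R sᶜ, x = y + w := by
  have hx : x ∈ supported R R s ⊔ supported R R sᶜ := by
    simp [supported_eq_map, ← Submodule.map_sup, ← Finsupp.supported_union]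
  obtain ⟨y, hy, w, hw, rfl⟩ := Submodule.mem_sup.1 hx
  exact ⟨y, hy, w, hw, rfl⟩

lemma mul_mem_supported_preimage [AddMonoid M] [AddZeroClass ι] (deg : M →+ ι)
    {S T : Set ι} {x y : R[M]}
    (hx : x ∈ supported R R (deg ⁻¹' S)) (hy : y ∈ supported R R (deg ⁻¹' T)) :
    x * y ∈ supported R R (deg ⁻¹' (S + T)) := by
  classical
  intro g hg
  obtain ⟨a, ha, b, hb, rfl⟩ := Finset.mem_add.mp (support_coeff_mul_subset x y hg)
  rw [Set.mem_preimage, map_add]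
  exact Set.add_mem_add (hx ha) (hy hb)

end Semiring

section CommSemiring

variable [CommSemiring R] [AddCommMonoid M]

lemma sq_mem_supported_image [CharP R 2] {s : Set M} {x : R[M]} (hx : x ∈ supported R R s) :
    x ^ 2 ∈ supported R R ((2 • ·) '' s) := by
  rw [supported_eq_span_single] at hx
  induction hx using Submodule.span_induction with
  | mem y hy =>
    obtain ⟨g, hg, rfl⟩ := hy
    rw [single_pow, one_pow]
    exact single_mem_supported _ (Set.mem_image_of_mem _ hg)
  | zero => simp
  | add y w _ _ hy hw =>
    rw [add_pow_char]
    exact add_mem hy hw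
  | smul r y _ hy =>
    rw [smul_pow]
    exact Submodule.smul_mem _ _ hy

lemma mapDomain_eq_single_mul {s : Set M} (f : M → M) (t : M) (hf : ∀ g ∈ s, f g = t + g)
    {x : R[M]} (hx : x ∈ supported R R s) :
    mapDomain f x = single t 1 * x := by
  rw [supported_eq_span_single] at hx
  refine LinearMap.eqOn_span (f := mapDomainLinearMap R R f)
    (g := LinearMap.mulLeft R (single t 1)) ?_ hx
  rintro _ ⟨g, hg, rfl⟩
  simp [single_mul_single, hf g hg]

end CommSemiring

section ZMod4Graded

variable [CommRing R] [CharP R 2] [AddCommMonoid M] (deg : M →+ ZMod 4)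

local notation "𝒮[" S "]" => supported R R (deg ⁻¹' ((S : Finset (ZMod 4)) : Set (ZMod 4)))

lemma mul_eq_self_of_add_mul_add_mul_eq_one {e o z : R[M]} (he : e ∈ 𝒮[{0, 2}])
    (ho : o ∈ 𝒮[{1, 3}]) (hz : z ∈ 𝒮[{0}]) (h : (e + o) * (e + z * o) = 1) : z * o = o := by
  have mono : ∀ {S T : Finset (ZMod 4)} {x : R[M]}, S ⊆ T → x ∈ 𝒮[S] → x ∈ 𝒮[T] :=
    fun hST hx => supported_mono (Set.preimage_mono (Finset.coe_subset.2 hST)) hx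
  have disj : ∀ {S T : Finset (ZMod 4)} {x : R[M]}, Disjoint S T → x ∈ 𝒮[S] → x ∈ 𝒮[T] → x = 0 :=
    fun hST hS hT =>
      eq_zero_of_mem_supported_of_disjoint hS hT ((Finset.disjoint_coe.2 hST).preimage deg)
  have hsq : ∀ {S : Finset (ZMod 4)} {x : R[M]}, x ∈ 𝒮[S] → x ^ 2 ∈ 𝒮[S.image (2 • ·)] := by
    intro S x hx
    refine supported_mono ?_ (sq_mem_supported_image hx)
    rintro _ ⟨g, hg, rfl⟩
    simpa using ⟨_, hg, rfl⟩
  have hmul : ∀ {S T : Finset (ZMod 4)} {x y : R[M]}, x ∈ 𝒮[S] → y ∈ 𝒮[T] → x * y ∈ 𝒮[S + T] := by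
    intro S T x y hx hy
    rw [Finset.coe_add]
    exact mul_mem_supported_preimage deg hx hy
  have hone : (1 : R[M]) ∈ 𝒮[{0}] := single_mem_supported _ (by simp)
  have he2 : e ^ 2 ∈ 𝒮[{0}] := mono (by decide) (hsq he)
  have hzo2 : z * o ^ 2 ∈ 𝒮[{2}] := mono (by decide) (hmul hz (hsq ho))
  have heo : (1 + z) * (e * o) ∈ 𝒮[{1, 3}] :=
    mono (by decide) (hmul (add_mem hone hz) (hmul he ho))
  have hsplit : 1 - e ^ 2 = z * o ^ 2 + (1 + z) * (e * o) := by linear_combination -h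
  have hsplit0 := disj (S := {0}) (T := {1, 2, 3}) (by decide) (sub_mem hone he2)
    (hsplit ▸ add_mem (mono (by decide) hzo2) (mono (by decide) heo))
  have he2_eq : e ^ 2 = 1 := (sub_eq_zero.1 hsplit0).symm
  have heo_eq : (1 + z) * (e * o) = 0 := by
    refine disj (S := {2}) (by decide) ?_ heo
    have : (1 + z) * (e * o) = -(z * o ^ 2) := by linear_combination -hsplit - he2_eq
    exact this ▸ neg_mem hzo2
  linear_combination e * heo_eq - (1 + z) * o * he2_eq - o * CharTwo.two_eq_zero (R := R[M])

end ZMod4Graded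

end AddMonoidAlgebra

lemma four_dvd_two_pow {n : ℕ} (hn : 2 ≤ n) : 4 ∣ 2 ^ n := pow_dvd_pow 2 hn

def mod4 (n : ℕ) (hn : 2 ≤ n) : ZMod (2 ^ n) →+ ZMod 4 :=
  (ZMod.castHom (four_dvd_two_pow hn) (ZMod 4)).toAddMonoidHom

lemma mod4_apply {n : ℕ} (hn : 2 ≤ n) (g : ZMod (2 ^ n)) :
    mod4 n hn g = ZMod.castHom (four_dvd_two_pow hn) (ZMod 4) g :=
  rfl

lemma mod4_val_mod_two {n : ℕ} (hn : 2 ≤ n) (g : ZMod (2 ^ n)) :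
    (mod4 n hn g).val % 2 = g.val % 2 := by
  rw [mod4_apply, ZMod.castHom_apply, ZMod.cast_eq_val, ZMod.val_natCast,
    Nat.mod_mod_of_dvd _ (by norm_num)]

lemma mod4_two_pow_pred {n : ℕ} (hn : 3 ≤ n) : mod4 n (by omega) (2 ^ (n - 1)) = 0 := by
  obtain ⟨k, hk⟩ : ∃ k, n - 1 = k + 2 := ⟨n - 3, by omega⟩
  rw [mod4_apply, map_pow, map_ofNat, hk, pow_add]
  exact mul_eq_zero_of_right _ (by decide)

lemma two_pow_pred_mul {n : ℕ} (hn : 1 ≤ n) (g : ZMod (2 ^ n)) :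
    (2 ^ (n - 1) : ZMod (2 ^ n)) * g = 2 ^ (n - 1) * ((g.val % 2 : ℕ) : ZMod (2 ^ n)) := by
  have h2n : (2 : ZMod (2 ^ n)) ^ (n - 1) * 2 = 0 := by
    rw [← pow_succ, Nat.sub_add_cancel hn]
    exact_mod_cast ZMod.natCast_self (2 ^ n)
  conv_lhs => rw [← ZMod.natCast_zmod_val g, ← Nat.mod_add_div g.val 2]
  push_cast
  linear_combination ((g.val / 2 : ℕ) : ZMod (2 ^ n)) * h2n

lemma sigma_add_eq_add_single_mul {F : Type} [Field F] {n : ℕ} (hn : 2 ≤ n) {e o : GA F n}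
    (he : e ∈ supported F F (mod4 n hn ⁻¹' ↑({0, 2} : Finset (ZMod 4))))
    (ho : o ∈ supported F F (mod4 n hn ⁻¹' ↑({1, 3} : Finset (ZMod 4)))) :
    sigma F n (2 ^ (n - 1) + 1) (e + o) = e + single (2 ^ (n - 1)) 1 * o := by
  have hcg (g : ZMod (2 ^ n)) :
      (2 ^ (n - 1) + 1) * g = 2 ^ (n - 1) * (((mod4 n hn g).val % 2 : ℕ) : ZMod (2 ^ n)) + g := by
    rw [add_mul, one_mul, two_pow_pred_mul (by omega), mod4_val_mod_two]
  rw [sigma, mapDomainRingHom_apply, mapDomain_add, mapDomain_eq_single_mul _ 0 ?even he,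
    mapDomain_eq_single_mul _ (2 ^ (n - 1)) ?odd ho, ← one_def, one_mul]
  case even =>
    intro g hg
    have hpar : ∀ k : ZMod 4, k ∈ ({0, 2} : Finset (ZMod 4)) → k.val % 2 = 0 := by decide
    simp [hcg, hpar _ hg]
  case odd =>
    intro g hg
    have hpar : ∀ k : ZMod 4, k ∈ ({1, 3} : Finset (ZMod 4)) → k.val % 2 = 1 := by decide
    simp [hcg, hpar _ hg]

theorem sigma4_unitary_symmetric_general (F : Type) [Field F] (hF : CharP F 2)
    (n : ℕ) (hn : 2 < n) (x : (GA F n)ˣ)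
    (h : (x : GA F n) * sigma F n (2^(n-1) + 1) x = 1) :
    sigma F n (2^(n-1) + 1) x = (x : GA F n) ∧ (x : GA F n)^2 = 1 := by
  have hn2 : 2 ≤ n := hn.le
  obtain ⟨e, he, o, ho, hx⟩ :=
    exists_eq_add_mem_supported_compl (mod4 n hn2 ⁻¹' ↑({0, 2} : Finset (ZMod 4))) (x : GA F n)
  rw [← Set.preimage_compl, ← Finset.coe_compl,
    show ({0, 2} : Finset (ZMod 4))ᶜ = {1, 3} by decide] at ho
  have hz : single (2 ^ (n - 1)) (1 : F) ∈
      supported F F (mod4 n hn2 ⁻¹' ↑({0} : Finset (ZMod 4))) :=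
    single_mem_supported _ (by simp [mod4_two_pow_pred hn])
  have hsym : sigma F n (2^(n-1) + 1) x = (x : GA F n) := by
    rw [hx, sigma_add_eq_add_single_mul hn2 he ho] at h ⊢
    rw [mul_eq_self_of_add_mul_add_mul_eq_one (R := F) _ he ho hz h]
  refine ⟨hsym, ?_⟩
  rw [sq, ← h, hsym]

/-- For `σ₄ : a ↦ a^{2^{n-1}+1}`: if a normalized unit `x` satisfies `x ⬝ x^{σ₄} = 1`,
then `x` is `σ₄`-symmetric and `x² = 1`. -/
theorem sigma4_unitary_symmetric (F : Type) [Field F] [Fintype F] (hF : CharP F 2)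
    (n : ℕ) (hn : 2 < n) (x : (GA F n)ˣ) (hx : x ∈ V F n)
    (h : (x : GA F n) * sigma F n (2^(n-1) + 1) x = 1) :
    sigma F n (2^(n-1) + 1) x = (x : GA F n) ∧ (x : GA F n)^2 = 1 :=
  sigma4_unitary_symmetric_general F hF n hn x h
end

section
/- Let n > 2, G = C_{2^n} = ⟨a⟩, F a finite field of characteristic 2, and σ₄ the involution induced by a ↦ a^{2^{n-1}+1}. For x = Σ_{i=0}^{2^n-1} α_i a^i ∈ FG, in the product x·x^{σ₄} the coefficients of a^{2j+1} and a^{2j+1+2^{n-1}} coincide for every 0 ≤ j < 2^{n-1}; consequently the sum of the coefficients of the odd-exponent terms of x·x^{σ₄} is zero. -/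
open AddMonoidAlgebra

/-! `σ₄` is induced by the involution `φ : i ↦ (2^(n-1)+1) i` of `ℤ/2^n`, so it is an
involutive ring automorphism of the commutative ring `FG`; hence `y = x σ₄(x)` is `σ₄`-fixed,
i.e. `y(φ k) = y(k)` for every `k`. For odd `k`, `φ k = k + 2^(n-1)`. The odd coefficients
therefore come in equal pairs `j, j + 2^(n-2)`, which cancel in characteristic `2`. -/

open Finset

namespace AddMonoidAlgebra

variable {R G : Type*}

lemma coeff_mapDomain_of_involutive [Semiring R] {φ : G → G} (hφ : Function.Involutive φ)
    (x : R[G]) (g : G) : (mapDomain φ x).coeff g = x.coeff (φ g) := by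
  conv_lhs => rw [← hφ g]
  exact Finsupp.mapDomain_apply hφ.injective x.coeff (φ g)

variable [CommSemiring R] [AddCommMonoid G]

lemma mapDomainRingHom_mul_mapDomainRingHom_self {φ : G →+ G} (hφ : Function.Involutive φ)
    (x : R[G]) :
    mapDomainRingHom R φ (x * mapDomainRingHom R φ x) = x * mapDomainRingHom R φ x := by
  have hσσ : mapDomainRingHom R φ (mapDomainRingHom R φ x) = x := by
    rw [← RingHom.comp_apply, ← mapDomainRingHom_comp,
      show φ.comp φ = AddMonoidHom.id G from AddMonoidHom.ext hφ, mapDomainRingHom_id,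
      RingHom.id_apply]
  rw [map_mul, hσσ, mul_comm]

lemma coeff_mul_mapDomainRingHom_self_apply {φ : G →+ G} (hφ : Function.Involutive φ)
    (x : R[G]) (g : G) :
    (x * mapDomainRingHom R φ x).coeff (φ g) = (x * mapDomainRingHom R φ x).coeff g := by
  rw [← coeff_mapDomain_of_involutive hφ, ← mapDomainRingHom_apply,
    mapDomainRingHom_mul_mapDomainRingHom_self hφ]

end AddMonoidAlgebra

namespace ZMod

lemma two_pow_pred_add_one_mul_odd (n j : ℕ) :
    (2 ^ (n - 1) + 1 : ZMod (2 ^ n)) * ((2 * j + 1 : ℕ) : ZMod (2 ^ n)) =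
      ((2 * j + 1 + 2 ^ (n - 1) : ℕ) : ZMod (2 ^ n)) := by
  rcases n with _ | m
  · exact Subsingleton.elim (α := ZMod 1) _ _
  have h0 : (2 : ZMod (2 ^ (m + 1))) ^ (m + 1) = 0 := by
    exact_mod_cast ZMod.natCast_self (2 ^ (m + 1))
  push_cast
  linear_combination (j : ZMod (2 ^ (m + 1))) * h0

lemma two_pow_pred_add_one_mul_self {n : ℕ} (hn : 2 ≤ n) :
    (2 ^ (n - 1) + 1 : ZMod (2 ^ n)) * (2 ^ (n - 1) + 1) = 1 := by
  obtain ⟨m, rfl⟩ : ∃ m, n = m + 2 := ⟨n - 2, by omega⟩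
  have h0 : (2 : ZMod (2 ^ (m + 2))) ^ (m + 2) = 0 := by
    exact_mod_cast ZMod.natCast_self (2 ^ (m + 2))
  rw [show m + 2 - 1 = m + 1 by omega]
  linear_combination ((2 : ZMod (2 ^ (m + 2))) ^ m + 1) * h0

end ZMod

lemma CharTwo.sum_range_add_self_eq_zero {R : Type*} [Ring R] [CharP R 2] (f : ℕ → R) (m : ℕ)
    (hf : ∀ j < m, f (m + j) = f j) : ∑ j ∈ range (m + m), f j = 0 := by
  rw [sum_range_add, ← sum_add_distrib]
  exact sum_eq_zero fun j hj => by
    rw [hf j (mem_range.mp hj), CharTwo.add_self_eq_zero]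

theorem sigma4_odd_coefficients_general (F : Type) [Field F] (hF : CharP F 2)
    (n : ℕ) (hn : 2 < n) (x : GA F n) :
    (∀ j : ℕ, j < 2^(n-1) →
      (x * sigma F n (2^(n-1) + 1) x).coeff ((2*j+1 : ℕ) : ZMod (2^n)) =
        (x * sigma F n (2^(n-1) + 1) x).coeff ((2*j+1+2^(n-1) : ℕ) : ZMod (2^n))) ∧
    ∑ j ∈ Finset.range (2^(n-1)),
      (x * sigma F n (2^(n-1) + 1) x).coeff ((2*j+1 : ℕ) : ZMod (2^n)) = 0 := by
  have hφ : Function.Involutive (AddMonoidHom.mulLeft (2 ^ (n - 1) + 1 : ZMod (2 ^ n))) :=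
    fun k => by
      simp only [AddMonoidHom.coe_mulLeft, ← mul_assoc,
        ZMod.two_pow_pred_add_one_mul_self (by omega : 2 ≤ n), one_mul]
  have hodd : ∀ j : ℕ,
      (x * sigma F n (2^(n-1) + 1) x).coeff ((2*j+1 : ℕ) : ZMod (2^n)) =
        (x * sigma F n (2^(n-1) + 1) x).coeff ((2*j+1+2^(n-1) : ℕ) : ZMod (2^n)) := fun j => by
    rw [← ZMod.two_pow_pred_add_one_mul_odd n j]
    exact (coeff_mul_mapDomainRingHom_self_apply hφ x _).symm
  refine ⟨fun j _ => hodd j, ?_⟩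
  have hhalf : 2 ^ (n - 1) = 2 ^ (n - 2) + 2 ^ (n - 2) := by
    rw [← two_mul, ← pow_succ']
    congr 1
    omega
  rw [hhalf]
  refine CharTwo.sum_range_add_self_eq_zero _ _ fun j _ => ?_
  rw [hodd j, hhalf]
  congr 2
  ring

/-- For `σ₄ : a ↦ a^{2^{n-1}+1}`: in `x ⬝ x^{σ₄}`, the coefficients of `a^{2j+1}`
and `a^{2j+1+2^{n-1}}` coincide, and the sum of all odd-exponent coefficients is zero. -/
theorem sigma4_odd_coefficients (F : Type) [Field F] [Fintype F] (hF : CharP F 2)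
    (n : ℕ) (hn : 2 < n) (x : GA F n) :
    (∀ j : ℕ, j < 2^(n-1) →
      (x * sigma F n (2^(n-1) + 1) x).coeff ((2*j+1 : ℕ) : ZMod (2^n)) =
        (x * sigma F n (2^(n-1) + 1) x).coeff ((2*j+1+2^(n-1) : ℕ) : ZMod (2^n))) ∧
    ∑ j ∈ Finset.range (2^(n-1)),
      (x * sigma F n (2^(n-1) + 1) x).coeff ((2*j+1 : ℕ) : ZMod (2^n)) = 0 :=
  sigma4_odd_coefficients_general F hF n hn x
end

section
/- Let n > 2, G = C_{2^n} = ⟨a⟩, F a finite field of characteristic 2, and σ₄ the involution induced by a ↦ a^{2^{n-1}+1}. For x = Σ_{i=0}^{2^n-1} α_i a^i, the coefficient of a^{4t+2} in x·x^{σ₄} equals (α_{2(t+2^{n-3})+1} + α_{2(t+2^{n-3})+1+2^{n-1}})², indices modulo 2^n. -/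
open AddMonoidAlgebra

/-! The coefficient of `g` in `x * σ x` is `∑ h, x_h x_{g - σ h}`. As `σ` is an involution fixing
`g`, the map `h ↦ g - σ h` is an involution of the index set preserving the summand, so in
characteristic 2 only its fixed points, the solutions of `h + σ h = g`, survive, each contributing
`x_h ^ 2`. For `σ = σ₄` and `g = 4t + 2` in `ℤ/2ⁿ` the solutions are `i = 2(t + 2ⁿ⁻³) + 1` and
`i + 2ⁿ⁻¹`, and `x_i ^ 2 + x_j ^ 2 = (x_i + x_j) ^ 2` in characteristic 2. -/

open Finset Function

theorem Finset.sum_eq_sum_filter_isFixedPt_of_involutive {ι R : Type*} [Fintype ι] [DecidableEq ι]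
    [Semiring R] [CharP R 2] {φ : ι → ι} (hφ : Involutive φ) {f : ι → R} (hf : ∀ i, f (φ i) = f i) :
    ∑ i, f i = ∑ i with φ i = i, f i := by
  have hcancel : ∑ i with ¬ φ i = i, f i = 0 :=
    sum_involution (fun i _ => φ i) (fun i _ => by rw [hf, CharTwo.add_self_eq_zero])
      (fun i hi _ => (mem_filter.1 hi).2) (fun i hi => by simpa [hφ i, eq_comm] using hi)
      (fun i _ => hφ i)
  rw [← sum_filter_add_sum_filter_not univ (fun i => φ i = i), hcancel, add_zero]

namespace AddMonoidAlgebra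

variable {R G : Type*} [AddCommGroup G]

theorem coeff_mapDomainRingHom_of_involutive [Semiring R] {φ : G →+ G} (hφ : Involutive φ)
    (x : R[G]) (g : G) :
    (mapDomainRingHom R φ x).coeff g = x.coeff (φ g) := by
  conv_lhs => rw [← hφ g]
  exact Finsupp.mapDomain_apply hφ.injective x.coeff (φ g)

theorem coeff_mul_mapDomainRingHom_self [Fintype G] [DecidableEq G] [CommSemiring R] [CharP R 2]
    {φ : G →+ G} (hφ : Involutive φ) {g : G} (hg : φ g = g) (x : R[G]) :
    (x * mapDomainRingHom R φ x).coeff g = ∑ h with h + φ h = g, x.coeff h ^ 2 := by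
  have hψ : Involutive fun h => g - φ h := fun h => by simp [hg, hφ h]
  have hcoeff : (x * mapDomainRingHom R φ x).coeff g = ∑ h, x.coeff h * x.coeff (g - φ h) := by
    rw [coeff_mul_apply_left, Finsupp.sum_fintype _ _ (by simp)]
    simp only [coeff_mapDomainRingHom_of_involutive hφ, neg_add_eq_sub, map_sub, hg]
  rw [hcoeff, sum_eq_sum_filter_isFixedPt_of_involutive hψ (fun h => by simp [hg, hφ h, mul_comm])]
  refine sum_congr (by ext; rw [mem_filter, mem_filter, sub_eq_iff_eq_add, eq_comm]) fun h hh => ?_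
  rw [← (mem_filter.1 hh).2, add_sub_cancel_right, sq]

end AddMonoidAlgebra

namespace ZMod

theorem two_pow_eq_zero (n : ℕ) : (2 : ZMod (2 ^ n)) ^ n = 0 := by
  exact_mod_cast natCast_self (2 ^ n)

theorem two_pow_ne_zero (k : ℕ) : (2 : ZMod (2 ^ (k + 1))) ^ k ≠ 0 := by
  have : ¬ 2 ^ (k + 1) ∣ 2 ^ k := by
    rw [Nat.pow_dvd_pow_iff_le_right (by norm_num)]
    omega
  exact_mod_cast mt (natCast_eq_zero_iff _ _).1 this

theorem two_mul_eq_zero_iff {k : ℕ} {d : ZMod (2 ^ (k + 1))} : 2 * d = 0 ↔ d = 0 ∨ d = 2 ^ k := by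
  refine ⟨fun h => ?_, ?_⟩
  · rw [← natCast_zmod_val d] at h ⊢
    have hdvd : 2 ^ k ∣ d.val := by
      have h' : 2 * 2 ^ k ∣ 2 * d.val := by
        rw [← pow_succ']
        exact (natCast_eq_zero_iff _ _).1 (by exact_mod_cast h)
      exact Nat.dvd_of_mul_dvd_mul_left two_pos h'
    obtain ⟨q, hq⟩ := hdvd
    have hq2 : q < 2 := by
      have := val_lt d
      rw [hq, pow_succ] at this
      exact Nat.lt_of_mul_lt_mul_left this
    interval_cases q <;> simp [hq]
  · rintro (rfl | rfl)
    · exact mul_zero 2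
    · rw [← pow_succ']
      exact two_pow_eq_zero _

theorem two_pow_add_one_mul_self (k : ℕ) :
    ((2 : ZMod (2 ^ (k + 2))) ^ (k + 1) + 1) * (2 ^ (k + 1) + 1) = 1 := by
  linear_combination (2 ^ k + 1 : ZMod (2 ^ (k + 2))) * two_pow_eq_zero (k + 2)

theorem two_pow_add_one_mul_two_mul (k : ℕ) (a : ZMod (2 ^ (k + 1))) :
    (2 ^ k + 1) * (2 * a) = 2 * a := by
  linear_combination a * two_pow_eq_zero (k + 1)

theorem self_add_two_pow_add_one_mul_eq_iff (m : ℕ) (τ h : ZMod (2 ^ (m + 3))) :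
    h + (2 ^ (m + 2) + 1) * h = 4 * τ + 2 ↔
      h = 2 * (τ + 2 ^ m) + 1 ∨ h = 2 * (τ + 2 ^ m) + 1 + 2 ^ (m + 2) := by
  have h0 := two_pow_eq_zero (m + 3)
  set d := h - (2 * (τ + 2 ^ m) + 1)
  have hsplit : h + (2 ^ (m + 2) + 1) * h - (4 * τ + 2) = (1 + 2 ^ (m + 1)) * (2 * d) := by
    linear_combination (τ + 2 ^ m + 1) * h0
  have hunit : (1 + 2 ^ (m + 1)) * (2 * d) = 0 ↔ 2 * d = 0 := by
    refine ⟨fun H => ?_, fun H => by rw [H, mul_zero]⟩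
    linear_combination (1 + 2 ^ (m + 1)) * H - (1 + 2 ^ m) * d * h0
  rw [← sub_eq_zero, hsplit, hunit, two_mul_eq_zero_iff, sub_eq_zero, sub_eq_iff_eq_add']

end ZMod

open ZMod in
theorem sigma4_coeff_of_four_t_plus_two_general (F : Type) [Field F] (hF : CharP F 2)
    (n : ℕ) (hn : 2 < n) (x : GA F n) (t : ℕ) :
    (x * sigma F n (2^(n-1) + 1) x).coeff ((4*t + 2 : ℕ) : ZMod (2^n)) =
      (x.coeff ((2*(t + 2^(n-3)) + 1 : ℕ) : ZMod (2^n)) +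
        x.coeff ((2*(t + 2^(n-3)) + 1 + 2^(n-1) : ℕ) : ZMod (2^n)))^2 := by
  obtain ⟨m, rfl⟩ : ∃ m, n = m + 3 := ⟨n - 3, by omega⟩
  push_cast
  set τ : ZMod (2 ^ (m + 3)) := (t : ZMod (2 ^ (m + 3)))
  set σ := AddMonoidHom.mulLeft ((2 : ZMod (2 ^ (m + 3))) ^ (m + 2) + 1)
  have hσ : Involutive σ := fun h => by simp [σ, ← mul_assoc, two_pow_add_one_mul_self (m + 1)]
  have hg : σ (4 * τ + 2) = 4 * τ + 2 := by
    rw [show 4 * τ + 2 = 2 * (2 * τ + 1) by ring]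
    exact two_pow_add_one_mul_two_mul (m + 2) _
  have hfib : ({h | h + σ h = 4 * τ + 2} : Finset (ZMod (2 ^ (m + 3)))) =
      {2 * (τ + 2 ^ m) + 1, 2 * (τ + 2 ^ m) + 1 + 2 ^ (m + 2)} := by
    ext h
    simp [σ, self_add_two_pow_add_one_mul_eq_iff]
  have hne : 2 * (τ + 2 ^ m) + 1 ≠ 2 * (τ + 2 ^ m) + 1 + 2 ^ (m + 2) := by
    simpa using two_pow_ne_zero (m + 2)
  have := hF
  rw [sigma, coeff_mul_mapDomainRingHom_self hσ hg, hfib, Finset.sum_pair hne, CharTwo.add_sq]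

/-- For `σ₄ : a ↦ a^{2^{n-1}+1}`: the coefficient of `a^{4t+2}` in `x ⬝ x^{σ₄}`
equals `(α_{2(t+2^{n-3})+1} + α_{2(t+2^{n-3})+1+2^{n-1}})²`, indices modulo `2^n`. -/
theorem sigma4_coeff_of_four_t_plus_two (F : Type) [Field F] [Fintype F] (hF : CharP F 2)
    (n : ℕ) (hn : 2 < n) (x : GA F n) (t : ℕ) :
    (x * sigma F n (2^(n-1) + 1) x).coeff ((4*t + 2 : ℕ) : ZMod (2^n)) =
      (x.coeff ((2*(t + 2^(n-3)) + 1 : ℕ) : ZMod (2^n)) +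
        x.coeff ((2*(t + 2^(n-3)) + 1 + 2^(n-1) : ℕ) : ZMod (2^n)))^2 :=
  sigma4_coeff_of_four_t_plus_two_general F hF n hn x t
end

section
/- Let G = C_{2^n} = ⟨a⟩ with n > 2, F a finite field of characteristic 2, and σ₃ the involution induced by a ↦ a^{2^{n-1}-1}. Then the intersection of V_{σ₃}(FG) with G (viewed inside V(FG)) is the subgroup ⟨a²⟩. In particular the exponent of V_{σ₃}(FG) is at least 2^{n-1}. -/
open AddMonoidAlgebra

/-- The group element `a^i` as a unit of the group algebra. -/
noncomputable def aPow (F : Type) [Field F] (n : ℕ) (i : ZMod (2^n)) : (GA F n)ˣ where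
  val := AddMonoidAlgebra.single i 1
  inv := AddMonoidAlgebra.single (-i) 1
  val_inv := by rw [AddMonoidAlgebra.single_mul_single]; simp [AddMonoidAlgebra.one_def]
  inv_val := by rw [AddMonoidAlgebra.single_mul_single]; simp [AddMonoidAlgebra.one_def]

/-- The canonical embedding of the cyclic group `C_{2^n}` into the units of `FC_{2^n}`. -/
noncomputable def aHom (F : Type) [Field F] (n : ℕ) :
    Multiplicative (ZMod (2^n)) →* (GA F n)ˣ where
  toFun i := aPow F n i.toAdd
  map_one' := by ext; simp [aPow, AddMonoidAlgebra.one_def]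
  map_mul' i j := by ext; simp [aPow, AddMonoidAlgebra.single_mul_single, add_comm]

/-! The unitary condition `σ₃(u) = u⁻¹` for a group element `u = aⁱ` reads `a^{2^{n-1} i} = 1`,
i.e. `i` is even; so the group elements in `V_{σ₃}(FG)` form `⟨a²⟩`, whose generator has
order `2^{n-1}`. -/

theorem ZMod.pow_pred_mul_eq_zero_iff {p n : ℕ} (hp : p ≠ 0) (hn : n ≠ 0) (i : ZMod (p ^ n)) :
    (p : ZMod (p ^ n)) ^ (n - 1) * i = 0 ↔ i ∈ AddSubgroup.zmultiples (p : ZMod (p ^ n)) := by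
  constructor
  · obtain ⟨k, rfl⟩ := ZMod.intCast_surjective i
    rw [← Int.cast_natCast, ← Int.cast_pow, ← Int.cast_mul, ZMod.intCast_zmod_eq_zero_iff_dvd,
      Nat.cast_pow, ← pow_sub_one_mul hn, Int.mul_dvd_mul_iff_left (by positivity)]
    rintro ⟨l, rfl⟩
    exact ⟨l, by push_cast; ring⟩
  · rintro ⟨l, rfl⟩
    dsimp only
    rw [zsmul_eq_mul, mul_left_comm, pow_sub_one_mul hn, ← Nat.cast_pow, ZMod.natCast_self,
      mul_zero]

theorem ZMod.addOrderOf_natCast_pow {p n : ℕ} (hp : p ≠ 0) (hn : n ≠ 0) :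
    addOrderOf (p : ZMod (p ^ n)) = p ^ (n - 1) := by
  rw [ZMod.addOrderOf_coe' _ hp, Nat.gcd_eq_right (dvd_pow_self p hn)]
  exact Nat.div_eq_of_eq_mul_left (Nat.pos_of_ne_zero hp) (pow_sub_one_mul hn p).symm

instance AddMonoidAlgebra.finite {k G : Type*} [Semiring k] [Finite k] [Finite G] :
    Finite (AddMonoidAlgebra k G) :=
  Finite.of_equiv _ (coeffEquiv.trans Finsupp.equivFunOnFinite).symm

section GroupElements

variable (F : Type) [Field F] (n : ℕ)

theorem aHom_injective : Function.Injective (aHom F n) :=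
  fun _ _ h => Multiplicative.toAdd.injective
    (AddMonoidAlgebra.single_left_injective one_ne_zero (congrArg Units.val h))

theorem orderOf_aHom (g : Multiplicative (ZMod (2 ^ n))) : orderOf (aHom F n g) = orderOf g :=
  orderOf_injective _ (aHom_injective F n) g

theorem aHom_mem_V (g : Multiplicative (ZMod (2 ^ n))) : aHom F n g ∈ V F n := by
  ext
  simp [aHom, aPow, aug, AddMonoidAlgebra.lift_single]

theorem sigma_single (c i : ZMod (2 ^ n)) (r : F) :
    sigma F n c (single i r) = single (c * i) r := by
  simp [sigma, AddMonoidAlgebra.mapDomainRingHom]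

theorem aHom_mem_Vsig_iff (c : ZMod (2 ^ n)) (g : Multiplicative (ZMod (2 ^ n))) :
    aHom F n g ∈ Vsig F n c ↔ (c + 1) * g.toAdd = 0 := by
  rw [Vsig, Subgroup.mem_inf, and_iff_right (aHom_mem_V F n g), MonoidHom.mem_ker,
    ← Units.val_inj]
  simp [aHom, aPow, sigma_single, single_mul_single, one_def, add_one_mul, single_left_inj]

end GroupElements

theorem sigma3_unitary_meet_group_general (F : Type) [Field F] [Fintype F]
    (n : ℕ) (hn : 2 < n) :
    Vsig F n (2^(n-1) - 1) ⊓ (aHom F n).range = Subgroup.zpowers (aPow F n 2) ∧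
      2^(n-1) ≤ Monoid.exponent ↥(Vsig F n (2^(n-1) - 1)) := by
  have hc : (2 ^ (n - 1) - 1 + 1 : ZMod (2 ^ n)) = 2 ^ (n - 1) := sub_add_cancel _ _
  have hker : (Vsig F n (2 ^ (n - 1) - 1)).comap (aHom F n) =
      Subgroup.zpowers (Multiplicative.ofAdd 2) := by
    ext g
    rw [Subgroup.mem_comap, aHom_mem_Vsig_iff, hc, Subgroup.mem_zpowers_iff]
    simpa [AddSubgroup.mem_zmultiples_iff, ← ofAdd_zsmul, ← Equiv.eq_symm_apply] using
      ZMod.pow_pred_mul_eq_zero_iff two_ne_zero (by omega) g.toAdd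
  have hmeet : Vsig F n (2^(n-1) - 1) ⊓ (aHom F n).range = Subgroup.zpowers (aPow F n 2) := by
    rw [inf_comm, ← Subgroup.map_comap_eq, hker, MonoidHom.map_zpowers]
    rfl
  refine ⟨hmeet, ?_⟩
  have hmem : aPow F n 2 ∈ Vsig F n (2^(n-1) - 1) :=
    (hmeet ▸ Subgroup.mem_zpowers (aPow F n 2)).1
  calc 2 ^ (n - 1) = orderOf (aHom F n (.ofAdd 2)) := by
        rw [orderOf_aHom, orderOf_ofAdd_eq_addOrderOf]
        simpa using (ZMod.addOrderOf_natCast_pow two_ne_zero (by omega)).symm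
    _ = orderOf (⟨aPow F n 2, hmem⟩ : Vsig F n (2^(n-1) - 1)) := (Subgroup.orderOf_mk _ _).symm
    _ ≤ _ := Monoid.orderOf_le_exponent Monoid.ExponentExists.of_finite _

/-- For `σ₃ : a ↦ a^{2^{n-1}-1}`: the intersection of `V_{σ₃}(FG)` with `G` (viewed
inside `V(FG)`) is `⟨a²⟩`; in particular the exponent of `V_{σ₃}(FG)` is at
least `2^{n-1}`. -/
theorem sigma3_unitary_meet_group (F : Type) [Field F] [Fintype F] (hF : CharP F 2)
    (n : ℕ) (hn : 2 < n) :
    Vsig F n (2^(n-1) - 1) ⊓ (aHom F n).range = Subgroup.zpowers (aPow F n 2) ∧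
      2^(n-1) ≤ Monoid.exponent ↥(Vsig F n (2^(n-1) - 1)) :=
  sigma3_unitary_meet_group_general F n hn
end

section
/- Let F be a finite field of characteristic 2 and n > 2. The three unitary subgroups of FC_{2^n} corresponding to the three involutory automorphisms of C_{2^n} (a ↦ a^{-1}, a ↦ a^{2^{n-1}-1}, a ↦ a^{2^{n-1}+1}) are pairwise non-isomorphic groups. -/
open AddMonoidAlgebra

/-!
The three groups have different exponents. Over a field of characteristic `2`, if `σ` is an
involutive automorphism of a finite abelian group and `σ k = k`, then the coefficient of `a^k` in
`σ(u) u` is `(∑_{j + σ j = k} u_j)^2`: the other terms cancel in pairs `j ↔ k - σ j`.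
Write `h = 2^(n-1)`.
* For `σ j = (h - 1) j` we have `j + σ j = h j`. At `k = 0`, `σ(u) u = 1` gives
  `∑_{h j = 0} u_j = 1`, hence `∑_{h j = h} u_j = 0` by the augmentation. These are the only two
  coefficients of `u ^ h = ∑ u_j^h a^(h j)`, so `u ^ h = 1`.
* For `σ j = (h + 1) j` we have `j + σ j = 2 w j` with `w = 1 + 2^(n-2)` a unit, so the
  coefficient of `σ(u) u` at `w k` is the coefficient of `u ^ 2` at `k`; hence `u ^ 2 = 1`.
* `a ∈ V_{-1}` has order `2^n`, and `a^2 ∈ V_{h-1}` has order `h > 2`.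
-/

open Finset

theorem CharTwo.sum_eq_sum_fixed_of_involutive {ι R : Type*} [Fintype ι] [DecidableEq ι]
    [Ring R] [CharP R 2] (ψ : ι → ι) (hψ : Function.Involutive ψ) (f : ι → R)
    (hf : ∀ i, f (ψ i) = f i) :
    ∑ i, f i = ∑ i with ψ i = i, f i := by
  rw [← sum_filter_add_sum_filter_not univ (fun i => ψ i = i), add_eq_left]
  refine sum_involution (fun i _ => ψ i) (fun i _ => by rw [hf, CharTwo.add_self_eq_zero])
    (fun i hi _ => (mem_filter.1 hi).2) (fun i hi => ?_) (fun i _ => hψ i)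
  simpa [hψ i, eq_comm] using hi

namespace AddMonoidAlgebra

variable {R G : Type*}

lemma coeff_one_apply [Semiring R] [AddZeroClass G] [DecidableEq G] (k : G) :
    (1 : R[G]).coeff k = if k = 0 then 1 else 0 := by
  simp [one_def, Finsupp.single_apply, eq_comm]

lemma coeff_pow_expChar_pow [CommSemiring R] [AddCommMonoid G] [Fintype G] [DecidableEq G]
    (p m : ℕ) [ExpChar R p] (x : R[G]) (k : G) :
    (x ^ p ^ m).coeff k = (∑ j with p ^ m • j = k, x.coeff j) ^ p ^ m := by
  have : ExpChar R[G] p :=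
    expChar_of_injective_ringHom (f := singleZeroRingHom) single_right_injective p
  conv_lhs => rw [← sum_coeff_single x, Finsupp.sum_fintype _ _ (by simp)]
  rw [sum_pow_char_pow, coeff_sum, sum_pow_char_pow, sum_filter]
  simp [single_pow, Finsupp.single_apply]

variable [CommRing R] [AddCommGroup G] [Fintype G]

lemma coeff_mul_eq_sum (x y : R[G]) (k : G) :
    (x * y).coeff k = ∑ j, x.coeff j * y.coeff (k - j) := by
  rw [coeff_mul_apply_left, Finsupp.sum_fintype _ _ (by simp)]
  simp [sub_eq_neg_add]

lemma coeff_mapDomain_mul_self [DecidableEq G] [CharP R 2] (φ : G →+ G)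
    (hφ : Function.Involutive φ) (x : R[G]) {k : G} (hk : φ k = k) :
    (mapDomain φ x * x).coeff k = (∑ j with j + φ j = k, x.coeff j) ^ 2 := by
  have hψ : Function.Involutive fun j => k - φ j := fun j => by simp [hk, hφ j]
  rw [coeff_mul_eq_sum, ← Equiv.sum_comp (hφ.toPerm φ)]
  simp only [Function.Involutive.coe_toPerm, coeff_mapDomain_of_involutive hφ, hφ _]
  rw [CharTwo.sum_eq_sum_fixed_of_involutive _ hψ _
    fun j => by rw [mul_comm, show k - φ (k - φ j) = j from hψ j], CharTwo.sum_sq]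
  refine sum_congr (filter_congr fun j _ => ?_) fun j hj => ?_
  · rw [sub_eq_iff_eq_add, add_comm, eq_comm]
  · rw [← (mem_filter.1 hj).2, add_sub_cancel_right, sq]

end AddMonoidAlgebra

namespace ZMod

lemma two_pow_eq_zero_iff {n k : ℕ} : (2 : ZMod (2 ^ n)) ^ k = 0 ↔ n ≤ k := by
  rw [show (2 : ZMod (2 ^ n)) ^ k = ((2 ^ k : ℕ) : ZMod (2 ^ n)) by push_cast; rfl,
    natCast_eq_zero_iff, Nat.pow_dvd_pow_iff_le_right (by norm_num)]

lemma two_pow_pred_mul_eq_zero_or_eq {n : ℕ} (hn : 0 < n) (j : ZMod (2 ^ n)) :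
    2 ^ (n - 1) * j = 0 ∨ 2 ^ (n - 1) * j = 2 ^ (n - 1) := by
  have h2n : (2 : ZMod (2 ^ n)) ^ (n - 1) * 2 = 0 := by
    rw [← pow_succ, Nat.sub_add_cancel hn, two_pow_eq_zero_iff]
  obtain ⟨t, ht | ht⟩ := Nat.even_or_odd' j.val <;>
    rw [← natCast_zmod_val j, ht] <;> push_cast
  · left
    rw [← mul_assoc, h2n, zero_mul]
  · right
    rw [mul_add, ← mul_assoc, h2n, zero_mul, zero_add, mul_one]

lemma isUnit_one_add_two_pow {n k : ℕ} (hk : 0 < k) : IsUnit (1 + (2 : ZMod (2 ^ n)) ^ k) :=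
  IsNilpotent.isUnit_one_add ⟨n, by rw [← pow_mul, two_pow_eq_zero_iff]; nlinarith⟩

end ZMod

section Unitary

variable {F : Type} [Field F] {n : ℕ}

lemma mem_Vsig_iff {c : ZMod (2 ^ n)} {u : (GA F n)ˣ} :
    u ∈ Vsig F n c ↔ ∑ j, (u : GA F n).coeff j = 1 ∧
      mapDomain (AddMonoidHom.mulLeft c) (u : GA F n) * u = 1 := by
  simp [Vsig, V, aug, Units.ext_iff, lift_apply, Finsupp.sum_fintype, sigma]

lemma not_exponent_Vsig_dvd {c j : ZMod (2 ^ n)} (hj : c * j + j = 0) {r : ℕ}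
    (hr : r • j ≠ 0) :
    ¬Monoid.exponent (Vsig F n c) ∣ r := by
  set a := (of F (ZMod (2 ^ n))).toHomUnits (Multiplicative.ofAdd j)
  have ha : a ∈ Vsig F n c := by
    rw [mem_Vsig_iff]
    simp [a, of_apply, Finsupp.single_apply, hj, one_def]
  intro hdvd
  have hpow : a ^ r = 1 :=
    congrArg Subtype.val (Monoid.exponent_dvd_iff_forall_pow_eq_one.1 hdvd ⟨a, ha⟩)
  apply hr
  simpa [a, ← map_pow, Units.ext_iff, of_apply, one_def, single_left_inj] using hpow

variable [CharP F 2]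

lemma pow_two_pow_pred_eq_one_of_mem_Vsig (hn : 1 < n) {u : (GA F n)ˣ}
    (hu : u ∈ Vsig F n (2 ^ (n - 1) - 1)) : u ^ 2 ^ (n - 1) = 1 := by
  set h : ZMod (2 ^ n) := 2 ^ (n - 1) with h_def
  have h_ne : h ≠ 0 := by rw [h_def, Ne, ZMod.two_pow_eq_zero_iff]; omega
  have h_sq : h * h = 0 := by rw [← pow_add, ZMod.two_pow_eq_zero_iff]; omega
  have h_two : 2 * h = 0 := by rw [← pow_succ', ZMod.two_pow_eq_zero_iff]; omega
  have h_dich (j : ZMod (2 ^ n)) : h * j = 0 ∨ h * j = h :=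
    ZMod.two_pow_pred_mul_eq_zero_or_eq (by omega) j
  obtain ⟨haug, hσ⟩ := mem_Vsig_iff.1 hu
  have hinv : Function.Involutive (AddMonoidHom.mulLeft (h - 1)) := fun g => by
    simp only [AddMonoidHom.coe_mulLeft]; linear_combination g * h_sq - g * h_two
  have h_even : ∑ j with h * j = 0, (u : GA F n).coeff j = 1 := by
    have key := coeff_mapDomain_mul_self _ hinv (u : GA F n) (mul_zero _)
    rw [hσ, coeff_one_apply, if_pos rfl] at key
    rw [← CharTwo.sq_inj, one_pow, key]
    congr 2
    exact filter_congr fun j _ => by rw [AddMonoidHom.coe_mulLeft]; ring_nf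
  have h_odd : ∑ j with h * j = h, (u : GA F n).coeff j = 0 := by
    have hsplit := sum_filter_add_sum_filter_not univ (fun j => h * j = 0) (u : GA F n).coeff
    rwa [h_even, haug, add_eq_left, filter_congr fun j _ =>
      ⟨(h_dich j).resolve_left, fun e e₀ => h_ne (e.symm.trans e₀)⟩] at hsplit
  ext1
  ext k
  rw [Units.val_pow_eq_pow_val, coeff_pow_expChar_pow, Units.val_one, coeff_one_apply]
  simp_rw [nsmul_eq_mul, Nat.cast_pow, Nat.cast_ofNat, ← h_def]
  split_ifs with hk
  · rw [hk, h_even, one_pow]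
  · suffices ∑ j with h * j = k, (u : GA F n).coeff j = 0 by rw [this, zero_pow (by positivity)]
    by_cases hkh : k = h
    · rwa [hkh]
    · refine sum_eq_zero fun j hj => absurd (mem_filter.1 hj).2 fun e => ?_
      rcases h_dich j with e' | e' <;> rw [e] at e'
      exacts [hk e', hkh e']

lemma sq_eq_one_of_mem_Vsig (hn : 2 < n) {u : (GA F n)ˣ}
    (hu : u ∈ Vsig F n (2 ^ (n - 1) + 1)) : u ^ 2 = 1 := by
  set h : ZMod (2 ^ n) := 2 ^ (n - 1) with h_def
  set w : ZMod (2 ^ n) := 1 + 2 ^ (n - 2) with w_def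
  have hw : IsUnit w := ZMod.isUnit_one_add_two_pow (by omega)
  have h_sq : h * h = 0 := by rw [← pow_add, ZMod.two_pow_eq_zero_iff]; omega
  have h_two : 2 * h = 0 := by rw [← pow_succ', ZMod.two_pow_eq_zero_iff]; omega
  have hw_two : 2 * w = 2 + h := by
    rw [w_def, h_def, mul_add, mul_one, ← pow_succ', show n - 2 + 1 = n - 1 by omega]
  obtain ⟨-, hσ⟩ := mem_Vsig_iff.1 hu
  have hinv : Function.Involutive (AddMonoidHom.mulLeft (h + 1)) := fun g => by
    simp only [AddMonoidHom.coe_mulLeft]; linear_combination g * h_sq + g * h_two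
  ext1
  ext k
  have hsq := coeff_pow_expChar_pow 2 1 (u : GA F n) k
  simp only [pow_one, two_nsmul] at hsq
  rw [Units.val_pow_eq_pow_val, hsq, Units.val_one, coeff_one_apply]
  by_cases hk : h * k = 0
  · have hfix : (h + 1) * (w * k) = w * k := by linear_combination w * hk
    have key := coeff_mapDomain_mul_self _ hinv (u : GA F n) hfix
    rw [hσ, coeff_one_apply] at key
    simp only [hw.mul_right_eq_zero] at key
    rw [key]
    congr 2
    refine filter_congr fun j _ => ?_
    rw [AddMonoidHom.coe_mulLeft, ← hw.mul_right_inj]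
    constructor <;> intro e
    exacts [by linear_combination e - j * hw_two, by linear_combination e + j * hw_two]
  · have hk0 : k ≠ 0 := fun e => hk (by rw [e, mul_zero])
    rw [if_neg hk0, sum_eq_zero fun j hj => absurd (mem_filter.1 hj).2 fun e => hk ?_,
      zero_pow two_ne_zero]
    linear_combination j * h_two - h * e

lemma exponent_Vsig_two_pow_pred_sub_one_dvd (hn : 1 < n) :
    Monoid.exponent (Vsig F n (2 ^ (n - 1) - 1)) ∣ 2 ^ (n - 1) :=
  Monoid.exponent_dvd_iff_forall_pow_eq_one.2 fun u =>
    Subtype.ext (pow_two_pow_pred_eq_one_of_mem_Vsig hn u.2)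

lemma exponent_Vsig_two_pow_pred_add_one_dvd (hn : 2 < n) :
    Monoid.exponent (Vsig F n (2 ^ (n - 1) + 1)) ∣ 2 :=
  Monoid.exponent_dvd_iff_forall_pow_eq_one.2 fun u => Subtype.ext (sq_eq_one_of_mem_Vsig hn u.2)

end Unitary

lemma isEmpty_mulEquiv_of_not_exponent_dvd {G H : Type*} [Monoid G] [Monoid H] {r : ℕ}
    (hG : ¬Monoid.exponent G ∣ r) (hH : Monoid.exponent H ∣ r) : IsEmpty (G ≃* H) :=
  ⟨fun e => hG (Monoid.exponent_eq_of_mulEquiv e ▸ hH)⟩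

theorem unitary_subgroups_pairwise_nonisomorphic_general (F : Type) [Field F]
    (hF : CharP F 2) (n : ℕ) (hn : 2 < n) :
    IsEmpty (↥(Vsig F n (-1)) ≃* ↥(Vsig F n (2^(n-1) - 1))) ∧
    IsEmpty (↥(Vsig F n (-1)) ≃* ↥(Vsig F n (2^(n-1) + 1))) ∧
    IsEmpty (↥(Vsig F n (2^(n-1) - 1)) ≃* ↥(Vsig F n (2^(n-1) + 1))) := by
  have : CharP F 2 := hF
  have hneg_not_dvd : ¬Monoid.exponent (Vsig F n (-1)) ∣ 2 ^ (n - 1) :=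
    not_exponent_Vsig_dvd (j := 1) (by ring) (by
      rw [nsmul_one, Nat.cast_pow, Nat.cast_ofNat, Ne, ZMod.two_pow_eq_zero_iff]; omega)
  have hneg_not_dvd_two : ¬Monoid.exponent (Vsig F n (-1)) ∣ 2 :=
    fun h => hneg_not_dvd (h.trans (dvd_pow_self 2 (by omega)))
  have hsub_not_dvd : ¬Monoid.exponent (Vsig F n (2 ^ (n - 1) - 1)) ∣ 2 :=
    not_exponent_Vsig_dvd (j := 2)
      (by rw [sub_one_mul, sub_add_cancel, ← pow_succ, Nat.sub_add_cancel (by omega),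
        ZMod.two_pow_eq_zero_iff])
      (by rw [two_nsmul, ← two_mul, ← sq, Ne, ZMod.two_pow_eq_zero_iff]; omega)
  have hsub_dvd : Monoid.exponent (Vsig F n (2 ^ (n - 1) - 1)) ∣ 2 ^ (n - 1) :=
    exponent_Vsig_two_pow_pred_sub_one_dvd (by omega)
  have hadd_dvd : Monoid.exponent (Vsig F n (2 ^ (n - 1) + 1)) ∣ 2 :=
    exponent_Vsig_two_pow_pred_add_one_dvd hn
  exact ⟨isEmpty_mulEquiv_of_not_exponent_dvd hneg_not_dvd hsub_dvd,
    isEmpty_mulEquiv_of_not_exponent_dvd hneg_not_dvd_two hadd_dvd,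
    isEmpty_mulEquiv_of_not_exponent_dvd hsub_not_dvd hadd_dvd⟩

/-- The three unitary subgroups of `FC_{2^n}` (n > 2) corresponding to the three
involutory automorphisms `a ↦ a⁻¹`, `a ↦ a^{2^{n-1}-1}`, `a ↦ a^{2^{n-1}+1}`
are pairwise non-isomorphic. -/
theorem unitary_subgroups_pairwise_nonisomorphic (F : Type) [Field F] [Fintype F]
    (hF : CharP F 2) (n : ℕ) (hn : 2 < n) :
    IsEmpty (↥(Vsig F n (-1)) ≃* ↥(Vsig F n (2^(n-1) - 1))) ∧
    IsEmpty (↥(Vsig F n (-1)) ≃* ↥(Vsig F n (2^(n-1) + 1))) ∧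
    IsEmpty (↥(Vsig F n (2^(n-1) - 1)) ≃* ↥(Vsig F n (2^(n-1) + 1))) :=
  unitary_subgroups_pairwise_nonisomorphic_general F hF n hn
end
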